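/- arXiv:1908.07186 — 8 statements merged into one kernel-verified Lean document; each statement's English description precedes it below -/
import Mathlib

section
/- Let μ be a probability measure on (0,∞), let λ > 0, and let ρ₁ < ρ₂ be real numbers such that 0 < ∫₀^∞ a^{ρ} e^{-λ a} μ(da) < ∞ for ρ ∈ {ρ₁, ρ₂}. For ρ ∈ {ρ₁, ρ₂} and x ≥ λ define the tilted probability measure μ_{ρ,x}(da) = a^{ρ} e^{-x a} μ(da) / ∫₀^∞ a^{ρ} e^{-x a} μ(da), and let ν be the probability measure on (0,∞) with Lebesgue density y ↦ y^{ρ₂-ρ₁-1} (∫₀^∞ a^{ρ₂} e^{-(λ+y) a} μ(da)) / (Γ(ρ₂-ρ₁) ∫₀^∞ a^{ρ₁} e^{-λ a} μ(da)). Then for every Borel set B ⊆ (0,∞), ∫₀^∞ μ_{ρ₂, λ+y}(B) ν(dy) = μ_{ρ₁, λ}(B); that is, the ν-mixture of the tilted laws μ_{ρ₂, λ+y} equals μ_{ρ₁, λ}. -/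
open MeasureTheory Set Real

/-! Since `∫₀^∞ y^(s-1) e^(-y a) dy = Γ(s) a^(-s)` for `a > 0`, Fubini turns the
`y^(ρ₂-ρ₁-1) dy`-mixture of the unnormalised tilts `a^ρ₂ e^(-(λ+y) a) μ(da)` into
`Γ(ρ₂-ρ₁) a^ρ₁ e^(-λ a) μ(da)`. In the mixture of the normalised laws, the normalising
constant of `μ_{ρ₂,λ+y}` cancels against the density of `ν`, so it suffices to apply this
to `μ` restricted to `B`. -/

lemma integral_pos_of_ae_pos {α : Type*} [MeasurableSpace α] {μ : Measure α} [NeZero μ]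
    {f : α → ℝ} (hf : ∀ᵐ x ∂μ, 0 < f x) (hfi : Integrable f μ) : 0 < ∫ x, f x ∂μ := by
  have hsupp : Function.support f =ᵐ[μ] univ :=
    ae_eq_univ.2 <| measure_mono_null (fun x hx hfx => hx (ne_of_gt hfx)) (ae_iff.1 hf)
  rw [integral_pos_iff_support_of_nonneg_ae (hf.mono fun _ h => h.le) hfi, measure_congr hsupp]
  exact Measure.measure_univ_pos.2 (NeZero.ne μ)

lemma integrable_rpow_mul_exp_neg_mul_of_le {μ : Measure ℝ} {ρ x x' : ℝ}
    (hpos : ∀ᵐ a ∂μ, 0 < a) (hx : x ≤ x') (h : Integrable (fun a => a ^ ρ * exp (-x * a)) μ) :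
    Integrable (fun a => a ^ ρ * exp (-x' * a)) μ := by
  refine h.mono' (by fun_prop) (hpos.mono fun a ha => ?_)
  rw [norm_of_nonneg (by positivity)]
  gcongr

lemma integral_Ioi_rpow_mul_rpow_mul_exp_neg_add_mul {a x ρ₁ ρ₂ : ℝ} (ha : 0 < a)
    (hρ : ρ₁ < ρ₂) :
    ∫ y in Ioi 0, y ^ (ρ₂ - ρ₁ - 1) * (a ^ ρ₂ * exp (-(x + y) * a))
      = Gamma (ρ₂ - ρ₁) * (a ^ ρ₁ * exp (-x * a)) := by
  have hsplit : ∀ y : ℝ, y ^ (ρ₂ - ρ₁ - 1) * (a ^ ρ₂ * exp (-(x + y) * a))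
      = a ^ ρ₂ * exp (-x * a) * (y ^ (ρ₂ - ρ₁ - 1) * exp (-(a * y))) := fun y => by
    rw [show -(x + y) * a = -x * a + -(a * y) by ring, exp_add]
    ring
  simp_rw [hsplit]
  rw [integral_const_mul, integral_rpow_mul_exp_neg_mul_Ioi (sub_pos.2 hρ) ha, one_div,
    inv_rpow ha.le, ← rpow_neg ha.le]
  have hexp : a ^ ρ₂ * a ^ (-(ρ₂ - ρ₁)) = a ^ ρ₁ := by
    rw [← rpow_add ha]
    ring_nf
  rw [← hexp]
  ring

lemma integral_Ioi_rpow_mul_integral_rpow_mul_exp_neg_add_mul {μ : Measure ℝ} [SFinite μ]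
    {x ρ₁ ρ₂ : ℝ} (hpos : ∀ᵐ a ∂μ, 0 < a) (hρ : ρ₁ < ρ₂)
    (hint : Integrable (fun a => a ^ ρ₁ * exp (-x * a)) μ) :
    ∫ y in Ioi 0, y ^ (ρ₂ - ρ₁ - 1) * ∫ a, a ^ ρ₂ * exp (-(x + y) * a) ∂μ
      = Gamma (ρ₂ - ρ₁) * ∫ a, a ^ ρ₁ * exp (-x * a) ∂μ := by
  set f : ℝ → ℝ → ℝ := fun y a => y ^ (ρ₂ - ρ₁ - 1) * (a ^ ρ₂ * exp (-(x + y) * a))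
  have hinner : ∀ᵐ a ∂μ, ∫ y in Ioi 0, f y a = Gamma (ρ₂ - ρ₁) * (a ^ ρ₁ * exp (-x * a)) :=
    hpos.mono fun a ha => integral_Ioi_rpow_mul_rpow_mul_exp_neg_add_mul ha hρ
  have hf : Integrable (Function.uncurry f) ((volume.restrict (Ioi 0)).prod μ) := by
    rw [integrable_prod_iff' (by fun_prop)]
    constructor
    · -- the inner integral is nonzero, so the integrand is integrable
      filter_upwards [hpos, hinner] with a ha h
      refine Integrable.of_integral_ne_zero ?_
      simp only [Function.uncurry_apply_pair]
      rw [h]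
      have := Gamma_pos_of_pos (sub_pos.2 hρ)
      positivity
    · refine (hint.const_mul (Gamma (ρ₂ - ρ₁))).congr ?_
      filter_upwards [hpos, hinner] with a ha h
      rw [← h]
      refine setIntegral_congr_fun measurableSet_Ioi fun y (hy : 0 < y) => ?_
      simp only [Function.uncurry_apply_pair, f]
      exact (norm_of_nonneg (by positivity)).symm
  calc ∫ y in Ioi 0, y ^ (ρ₂ - ρ₁ - 1) * ∫ a, a ^ ρ₂ * exp (-(x + y) * a) ∂μ
      = ∫ y in Ioi 0, ∫ a, f y a ∂μ := by simp_rw [f, integral_const_mul]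
    _ = ∫ a, (∫ y in Ioi 0, f y a) ∂μ := integral_integral_swap hf
    _ = Gamma (ρ₂ - ρ₁) * ∫ a, a ^ ρ₁ * exp (-x * a) ∂μ := by
      rw [integral_congr_ae hinner, integral_const_mul]

theorem stmt0_general (μ : Measure ℝ) [IsProbabilityMeasure μ] (hμ : μ (Set.Iic 0) = 0)
    (lam ρ₁ ρ₂ : ℝ) (hρ : ρ₁ < ρ₂)
    (h₁int : Integrable (fun a => a ^ ρ₁ * Real.exp (-lam * a)) μ)
    (h₂int : Integrable (fun a => a ^ ρ₂ * Real.exp (-lam * a)) μ)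
    (B : Set ℝ) :
    ∫ y in Set.Ioi (0 : ℝ),
        (y ^ (ρ₂ - ρ₁ - 1) * (∫ a, a ^ ρ₂ * Real.exp (-(lam + y) * a) ∂μ) /
            (Real.Gamma (ρ₂ - ρ₁) * ∫ a, a ^ ρ₁ * Real.exp (-lam * a) ∂μ)) *
          ((∫ a in B, a ^ ρ₂ * Real.exp (-(lam + y) * a) ∂μ) /
            ∫ a, a ^ ρ₂ * Real.exp (-(lam + y) * a) ∂μ)
      = (∫ a in B, a ^ ρ₁ * Real.exp (-lam * a) ∂μ) /
          ∫ a, a ^ ρ₁ * Real.exp (-lam * a) ∂μ := by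
  set Z₁ := ∫ a, a ^ ρ₁ * exp (-lam * a) ∂μ
  have hpos : ∀ᵐ a ∂μ, 0 < a :=
    (measure_eq_zero_iff_ae_notMem.1 hμ).mono fun _ ha => not_le.1 ha
  have hZ : ∀ y ∈ Ioi (0 : ℝ), ∫ a, a ^ ρ₂ * exp (-(lam + y) * a) ∂μ ≠ 0 := fun y hy =>
    (integral_pos_of_ae_pos (hpos.mono fun a ha => by positivity)
      (integrable_rpow_mul_exp_neg_mul_of_le hpos (by linarith [mem_Ioi.1 hy]) h₂int)).ne'
  have hΓ : Gamma (ρ₂ - ρ₁) ≠ 0 := (Gamma_pos_of_pos (sub_pos.2 hρ)).ne'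
  calc _ = ∫ y in Ioi 0, (Gamma (ρ₂ - ρ₁) * Z₁)⁻¹ *
        (y ^ (ρ₂ - ρ₁ - 1) * ∫ a in B, a ^ ρ₂ * exp (-(lam + y) * a) ∂μ) :=
        setIntegral_congr_fun measurableSet_Ioi fun y hy => by
          have hZy := hZ y hy
          generalize ∫ a, a ^ ρ₂ * exp (-(lam + y) * a) ∂μ = Z at hZy ⊢
          field_simp
    _ = _ := by
      rw [integral_const_mul, integral_Ioi_rpow_mul_integral_rpow_mul_exp_neg_add_mul
        (ae_restrict_of_ae hpos) hρ h₁int.restrict, mul_inv, mul_mul_mul_comm,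
        inv_mul_cancel₀ hΓ, one_mul, inv_mul_eq_div]

/-- **Proposition 1 (transfer identity).** For a probability measure `μ` on `(0,∞)`,
`λ > 0`, `ρ₁ < ρ₂` with finite positive tilting integrals, the `ν`-mixture of the
`(ρ₂, λ+y)`-tilted laws equals the `(ρ₁, λ)`-tilted law, where `ν` has the indicated
Lebesgue density on `(0,∞)`.  The value of the `(ρ, x)`-tilted law on a Borel set `B` is
`(∫_B a^ρ e^{-x a} μ(da)) / (∫ a^ρ e^{-x a} μ(da))`. -/
theorem stmt0 (μ : Measure ℝ) [IsProbabilityMeasure μ] (hμ : μ (Set.Iic 0) = 0)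
    (lam ρ₁ ρ₂ : ℝ) (hlam : 0 < lam) (hρ : ρ₁ < ρ₂)
    (h₁pos : 0 < ∫ a, a ^ ρ₁ * Real.exp (-lam * a) ∂μ)
    (h₁int : Integrable (fun a => a ^ ρ₁ * Real.exp (-lam * a)) μ)
    (h₂pos : 0 < ∫ a, a ^ ρ₂ * Real.exp (-lam * a) ∂μ)
    (h₂int : Integrable (fun a => a ^ ρ₂ * Real.exp (-lam * a)) μ)
    (B : Set ℝ) (hB : MeasurableSet B) (hBsub : B ⊆ Set.Ioi 0) :
    ∫ y in Set.Ioi (0 : ℝ),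
        (y ^ (ρ₂ - ρ₁ - 1) * (∫ a, a ^ ρ₂ * Real.exp (-(lam + y) * a) ∂μ) /
            (Real.Gamma (ρ₂ - ρ₁) * ∫ a, a ^ ρ₁ * Real.exp (-lam * a) ∂μ)) *
          ((∫ a in B, a ^ ρ₂ * Real.exp (-(lam + y) * a) ∂μ) /
            ∫ a, a ^ ρ₂ * Real.exp (-(lam + y) * a) ∂μ)
      = (∫ a in B, a ^ ρ₁ * Real.exp (-lam * a) ∂μ) /
          ∫ a, a ^ ρ₁ * Real.exp (-lam * a) ∂μ :=
  stmt0_general μ hμ lam ρ₁ ρ₂ hρ h₁int h₂int B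
end

section
/- For every α ∈ (0,1) and all positive reals v, t, λ, w, one has λ^α ∫₀^w (w-r)^{α-1} e^{-λ t/(v r)} r^{-α-1} dr = Γ(α) v^{α} t^{-α} w^{α-1} e^{-λ t/(v w)}. -/
open MeasureTheory Set

lemma change_var (α : ℝ) (hα : α ∈ Set.Ioo (0 : ℝ) 1) (c w : ℝ) (hc : 0 < c) (hw : 0 < w) :
    ∫ r in Set.Ioo (0 : ℝ) w,
        (w - r) ^ (α - 1) * Real.exp (-c / r) * r ^ (-α - 1)
      = w ^ (α - 1) * Real.exp (-c / w) * ((1 / c) ^ α * Real.Gamma α) := by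
  set f : ℝ → ℝ := fun u => w / (1 + w * u) with hf
  have hden : ∀ u : ℝ, u ∈ Set.Ioi (0:ℝ) → (0:ℝ) < 1 + w * u := by
    intro u hu
    have : 0 < w * u := mul_pos hw hu
    linarith
  have himg : f '' Set.Ioi (0:ℝ) = Set.Ioo (0:ℝ) w := by
    ext r
    constructor
    · rintro ⟨u, hu, rfl⟩
      have hb := hden u hu
      have h1 : (1:ℝ) < 1 + w * u := by
        have : 0 < w * u := mul_pos hw hu
        linarith
      constructor
      · exact div_pos hw hb
      · rw [div_lt_iff₀ hb]
        nlinarith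
    · rintro ⟨hr0, hrw⟩
      refine ⟨(w - r) / (w * r), ?_, ?_⟩
      · exact div_pos (by linarith) (mul_pos hw hr0)
      · show w / (1 + w * ((w - r) / (w * r))) = r
        have h1 : (0:ℝ) ≤ (w - r) / (w * r) := le_of_lt (div_pos (by linarith) (by positivity))
        have hpos : (0:ℝ) < 1 + w * ((w - r) / (w * r)) := by
          have := mul_nonneg hw.le h1
          linarith
        rw [div_eq_iff hpos.ne']
        field_simp
        ring
  have hderiv : ∀ u ∈ Set.Ioi (0:ℝ),
      HasDerivWithinAt f (-(w^2) / (1 + w * u)^2) (Set.Ioi 0) u := by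
    intro u hu
    have hb := hden u hu
    have h1 : HasDerivAt (fun u : ℝ => 1 + w * u) w u := by
      simpa using ((hasDerivAt_id u).const_mul w).const_add 1
    have h2 : HasDerivAt f ((0 * (1 + w * u) - w * w) / (1 + w * u)^2) u :=
      (hasDerivAt_const u w).div h1 hb.ne'
    have : (0 * (1 + w * u) - w * w) / (1 + w * u)^2 = -(w^2) / (1 + w * u)^2 := by ring
    exact (this ▸ h2).hasDerivWithinAt
  have hinj : Set.InjOn f (Set.Ioi 0) := by
    intro a ha b hb hab
    have hba := hden a ha
    have hbb := hden b hb
    have : w * (1 + w * b) = w * (1 + w * a) := by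
      rw [div_eq_div_iff hba.ne' hbb.ne'] at hab
      linarith [hab]
    have h2 : 1 + w * b = 1 + w * a := mul_left_cancel₀ hw.ne' this
    have := mul_left_cancel₀ hw.ne' (by linarith : w * b = w * a)
    linarith
  have key := integral_image_eq_integral_abs_deriv_smul measurableSet_Ioi hderiv hinj
    (fun r => (w - r) ^ (α - 1) * Real.exp (-c / r) * r ^ (-α - 1))
  rw [himg] at key
  rw [key]
  have hcong : ∀ u ∈ Set.Ioi (0:ℝ),
      |(-(w^2) / (1 + w * u)^2)| •
        ((w - f u) ^ (α - 1) * Real.exp (-c / f u) * (f u) ^ (-α - 1))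
      = (w ^ (α - 1) * Real.exp (-c / w)) * (u ^ (α - 1) * Real.exp (-(c * u))) := by
    intro u hu
    have hu0 : (0:ℝ) < u := hu
    have hb := hden u hu
    have habs : |(-(w^2) / (1 + w * u)^2)| = w^2 / (1 + w * u)^2 := by
      rw [abs_div, abs_neg, abs_of_pos (by positivity), abs_of_pos (by positivity)]
    have hfu : f u = w / (1 + w * u) := rfl
    have hwf : w - f u = w^2 * u / (1 + w * u) := by
      rw [hfu]
      field_simp
      ring
    have hexp : Real.exp (-c / f u) = Real.exp (-c / w) * Real.exp (-(c * u)) := by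
      rw [← Real.exp_add]
      congr 1
      rw [hfu]
      field_simp
      ring
    rw [habs, hwf, hexp, hfu, smul_eq_mul]
    have h1 : (w^2 * u / (1 + w * u)) ^ (α - 1)
        = (w^(2:ℝ)) ^ (α - 1) * u ^ (α - 1) * ((1 + w * u) ^ (α - 1))⁻¹ := by
      rw [Real.div_rpow (by positivity) hb.le, Real.mul_rpow (by positivity) hu0.le,
        div_eq_mul_inv, ← Real.rpow_natCast w 2]
      norm_num
    have h2 : (w / (1 + w * u)) ^ (-α - 1)
        = w ^ (-α - 1) * ((1 + w * u) ^ (-α - 1))⁻¹ := by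
      rw [Real.div_rpow hw.le hb.le, div_eq_mul_inv]
    rw [h1, h2]
    have hb1 : (1 + w * u) ≠ 0 := hb.ne'
    rw [← Real.rpow_natCast w 2, ← Real.rpow_natCast (1 + w * u) 2,
      ← Real.rpow_neg hb.le (α - 1), ← Real.rpow_neg hb.le (-α - 1),
      ← Real.rpow_mul hw.le]
    push_cast
    have hww : w ^ (2:ℝ) * w ^ (2 * (α - 1)) * w ^ (-α - 1) = w ^ (α - 1) := by
      rw [← Real.rpow_add hw, ← Real.rpow_add hw]
      ring_nf
    have hbb : ((1 + w * u) ^ (2:ℝ))⁻¹ * (1 + w * u) ^ (-(α - 1)) * (1 + w * u) ^ (-(-α - 1))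
        = 1 := by
      rw [← Real.rpow_neg hb.le, ← Real.rpow_add hb, ← Real.rpow_add hb,
        show (-(2:ℝ) + -(α - 1) + -(-α - 1)) = 0 by ring, Real.rpow_zero]
    calc w ^ (2:ℝ) / (1 + w * u) ^ (2:ℝ) *
          (w ^ (2 * (α - 1)) * u ^ (α - 1) * (1 + w * u) ^ (-(α - 1)) *
            (Real.exp (-c / w) * Real.exp (-(c * u))) *
            (w ^ (-α - 1) * (1 + w * u) ^ (-(-α - 1))))
        = (w ^ (2:ℝ) * w ^ (2 * (α - 1)) * w ^ (-α - 1)) *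
            (((1 + w * u) ^ (2:ℝ))⁻¹ * (1 + w * u) ^ (-(α - 1)) * (1 + w * u) ^ (-(-α - 1))) *
            u ^ (α - 1) * (Real.exp (-c / w) * Real.exp (-(c * u))) := by
          rw [div_eq_mul_inv]; ring
      _ = _ := by rw [hww, hbb]; ring
  rw [setIntegral_congr_fun measurableSet_Ioi hcong, integral_const_mul,
    Real.integral_rpow_mul_exp_neg_mul_Ioi hα.1 hc]

/-- **Single-step integral identity** used in the proof of Proposition 2 of the paper:
for `α ∈ (0,1)` and positive `v, t, λ, w`,
`λ^α ∫₀^w (w-r)^{α-1} e^{-λ t/(v r)} r^{-α-1} dr = Γ(α) v^α t^{-α} w^{α-1} e^{-λ t/(v w)}`. -/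
theorem stmt2 (α : ℝ) (hα : α ∈ Set.Ioo (0 : ℝ) 1) (v t lam w : ℝ)
    (hv : 0 < v) (ht : 0 < t) (hlam : 0 < lam) (hw : 0 < w) :
    lam ^ α *
        ∫ r in Set.Ioo (0 : ℝ) w,
          (w - r) ^ (α - 1) * Real.exp (-(lam * t) / (v * r)) * r ^ (-α - 1)
      = Real.Gamma α * v ^ α * t ^ (-α) * w ^ (α - 1) * Real.exp (-(lam * t) / (v * w)) := by
  have hc : (0:ℝ) < lam * t / v := by positivity
  have hint : ∀ r : ℝ, Real.exp (-(lam * t) / (v * r)) = Real.exp (-(lam * t / v) / r) := by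
    intro r
    rw [neg_div, neg_div, div_div]
  simp_rw [hint]
  rw [change_var α hα (lam * t / v) w hc hw]
  have h1 : (1 / (lam * t / v)) ^ α = v ^ α * (lam ^ α)⁻¹ * (t ^ α)⁻¹ := by
    rw [show (1 / (lam * t / v)) = v / (lam * t) by field_simp,
      Real.div_rpow hv.le (by positivity), Real.mul_rpow hlam.le ht.le]
    field_simp
  rw [h1, Real.rpow_neg ht.le]
  have hl : (lam ^ α) ≠ 0 := by positivity
  have hT : (t ^ α) ≠ 0 := by positivity
  field_simp
end

section
/- Fix α ∈ (0,1), an integer n ≥ 1, positive reals s, λ, and reals 0 < w_l ≤ 1 for l = 1,…,n. Then the iterated integral ∫₀^{w₁} ⋯ ∫₀^{w_n} λ^{nα} e^{-λ s/(∏_{l=1}^n r_l)} ∏_{l=1}^n (w_l - r_l)^{α-1} r_l^{-(n-l+1)α-1} dr_n ⋯ dr₁ equals Γ(α)^n s^{-nα} e^{-λ s/(∏_{l=1}^n w_l)} ∏_{l=1}^n w_l^{lα-1}. -/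
/-!
Integrate out the last variable first. With `c = λ s / (r₁ ⋯ rₙ₋₁)`, the variable `rₙ` occurs
only in `e^{-c/rₙ} (wₙ - rₙ)^{α-1} rₙ^{-α-1}`, whose integral over `(0, wₙ)` is
`Γ(α) c^{-α} e^{-c/wₙ} wₙ^{α-1}`: the substitution `rₙ = (u + wₙ⁻¹)⁻¹` turns it into Euler's
integral for `Γ(α)`. The factor `c^{-α}` lowers every remaining exponent of `rₗ` by `α`, so what
is left is the `(n-1)`-fold integral of the same shape with `s` replaced by `s / wₙ`, and
induction on `n` concludes. Working with lower Lebesgue integrals of the nonnegative integrand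
lets Tonelli's theorem apply without integrability checks.
-/

open MeasureTheory Set Real
open scoped ENNReal

lemma lintegral_Ioi_rpow_mul_exp_neg_mul {a c : ℝ} (ha : 0 < a) (hc : 0 < c) :
    ∫⁻ u in Ioi 0, ENNReal.ofReal (u ^ (a - 1) * exp (-(c * u)))
      = ENNReal.ofReal (Gamma a * c ^ (-a)) := by
  have hint : IntegrableOn (fun u : ℝ => u ^ (a - 1) * exp (-(c * u))) (Ioi 0) := by
    simpa [neg_mul] using
      integrableOn_rpow_mul_exp_neg_mul_rpow (p := 1) (by linarith : -1 < a - 1) one_pos hc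
  rw [← ofReal_integral_eq_lintegral_ofReal hint, integral_rpow_mul_exp_neg_mul_Ioi ha hc,
    one_div, inv_rpow hc.le, ← rpow_neg hc.le, mul_comm]
  filter_upwards [ae_restrict_mem measurableSet_Ioi] with u hu
  exact mul_nonneg (rpow_nonneg (le_of_lt hu) _) (exp_pos _).le

lemma injective_inv_add_inv (w : ℝ) : Function.Injective fun u : ℝ => (u + w⁻¹)⁻¹ :=
  inv_injective.comp (add_left_injective _)

lemma image_inv_add_inv_Ioi {w : ℝ} (hw : 0 < w) :
    (fun u : ℝ => (u + w⁻¹)⁻¹) '' Ioi 0 = Ioo 0 w := by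
  ext r
  constructor
  · rintro ⟨u, hu, rfl⟩
    have hu : 0 < u := hu
    refine ⟨by positivity, ?_⟩
    simpa using inv_strictAnti₀ (inv_pos.2 hw) (lt_add_of_pos_left w⁻¹ hu)
  · rintro ⟨hr, hrw⟩
    exact ⟨r⁻¹ - w⁻¹, sub_pos.2 (inv_strictAnti₀ hr hrw), by simp⟩

lemma hasDerivAt_inv_add_inv {w u : ℝ} (hw : 0 ≤ w) (hu : 0 < u) :
    HasDerivAt (fun u : ℝ => (u + w⁻¹)⁻¹) (-((u + w⁻¹) ^ 2)⁻¹) u := by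
  simpa [neg_div] using ((hasDerivAt_id u).add_const w⁻¹).fun_inv (by positivity)

lemma jacobian_mul_kernel_inv_add_inv {α c w u : ℝ} (hw : 0 < w) (hu : 0 < u) :
    ((u + w⁻¹) ^ 2)⁻¹ * (exp (-c / (u + w⁻¹)⁻¹) * (w - (u + w⁻¹)⁻¹) ^ (α - 1)
        * ((u + w⁻¹)⁻¹) ^ (-α - 1))
      = exp (-c / w) * w ^ (α - 1) * (u ^ (α - 1) * exp (-(c * u))) := by
  set A := u + w⁻¹ with hA_def
  have hA : 0 < A := by positivity
  have hexp : -c / A⁻¹ = -(c * u) + -c / w := by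
    rw [hA_def]; field_simp; ring
  have hsub : w - A⁻¹ = w * u / A := by
    rw [eq_div_iff hA.ne', hA_def]; field_simp; ring
  have hpow : ((A ^ 2)⁻¹ * (A ^ (α - 1))⁻¹) * A ^ (α + 1) = 1 := by
    rw [← rpow_natCast A 2, ← rpow_neg hA.le, ← rpow_neg hA.le, ← rpow_add hA,
      ← rpow_add hA]
    ring_nf; exact rpow_zero A
  rw [hexp, exp_add, hsub, div_rpow (by positivity) hA.le, mul_rpow hw.le hu.le,
    inv_rpow hA.le, ← rpow_neg hA.le, show -(-α - 1) = α + 1 by ring]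
  linear_combination (exp (-(c * u)) * exp (-c / w) * (w ^ (α - 1) * u ^ (α - 1))) * hpow

lemma lintegral_Ioo_exp_neg_div_mul_sub_rpow_mul_rpow {α c w : ℝ} (hα : 0 < α) (hc : 0 < c)
    (hw : 0 < w) :
    ∫⁻ r in Ioo 0 w, ENNReal.ofReal (exp (-c / r) * (w - r) ^ (α - 1) * r ^ (-α - 1))
      = ENNReal.ofReal (Gamma α * c ^ (-α) * exp (-c / w) * w ^ (α - 1)) := by
  rw [← image_inv_add_inv_Ioi hw, lintegral_image_eq_lintegral_abs_deriv_mul measurableSet_Ioi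
    (fun u hu => (hasDerivAt_inv_add_inv hw.le hu).hasDerivWithinAt)
    (injective_inv_add_inv w).injOn]
  calc _ = ∫⁻ u in Ioi 0, ENNReal.ofReal (exp (-c / w) * w ^ (α - 1))
        * ENNReal.ofReal (u ^ (α - 1) * exp (-(c * u))) := by
        refine setLIntegral_congr_fun measurableSet_Ioi fun u hu => ?_
        rw [abs_neg, abs_of_nonneg (by positivity), ← ENNReal.ofReal_mul (by positivity),
          jacobian_mul_kernel_inv_add_inv hw hu, ← ENNReal.ofReal_mul (by positivity)]
    _ = _ := by
        rw [lintegral_const_mul' _ _ ENNReal.ofReal_ne_top,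
          lintegral_Ioi_rpow_mul_exp_neg_mul hα hc, ← ENNReal.ofReal_mul (by positivity)]
        congr 1; ring

lemma lintegral_univ_pi_eq_lintegral_lintegral_snoc {n : ℕ} (s : Fin (n + 1) → Set ℝ)
    {f : (Fin (n + 1) → ℝ) → ℝ≥0∞} (hf : Measurable f) :
    ∫⁻ r in univ.pi s, f r
      = ∫⁻ y in univ.pi (fun l => s l.castSucc), ∫⁻ x in s (Fin.last n), f (Fin.snoc y x) := by
  set e := MeasurableEquiv.piFinSuccAbove (fun _ => ℝ) (Fin.last n)
  have he :=
    (measurePreserving_piFinSuccAbove (fun l => volume.restrict (s l)) (Fin.last n)).symm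
  rw [volume_pi, Measure.restrict_pi_pi, ← he.lintegral_comp_emb e.symm.measurableEmbedding,
    lintegral_prod_symm' (fun p => f (e.symm p)) (hf.comp e.symm.measurable), volume_pi,
    Measure.restrict_pi_pi]
  simp [e, MeasurableEquiv.piFinSuccAbove_symm_apply, Fin.insertNthEquiv, Fin.insertNth_last']

-- Indices `l` are 0-based here, 1-based in the paper.
noncomputable def nfoldIntegrand {n : ℕ} (α lam s : ℝ) (w r : Fin n → ℝ) : ℝ :=
  lam ^ ((n : ℝ) * α) * exp (-(lam * s) / ∏ l, r l) *
    ∏ l, ((w l - r l) ^ (α - 1) * r l ^ (-(((n : ℝ) - ((l : ℕ) : ℝ)) * α) - 1))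

noncomputable def nfoldValue {n : ℕ} (α lam s : ℝ) (w : Fin n → ℝ) : ℝ :=
  Gamma α ^ n * s ^ (-(n : ℝ) * α) * exp (-(lam * s) / ∏ l, w l) *
    ∏ l, w l ^ ((((l : ℕ) : ℝ) + 1) * α - 1)

lemma nfoldIntegrand_snoc {n : ℕ} (α lam s : ℝ) (w : Fin (n + 1) → ℝ) (y : Fin n → ℝ)
    (x : ℝ) :
    nfoldIntegrand α lam s w (Fin.snoc y x)
      = lam ^ (((n : ℝ) + 1) * α) * (∏ l : Fin n, ((w l.castSucc - y l) ^ (α - 1)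
          * y l ^ (-(((n : ℝ) + 1 - ((l : ℕ) : ℝ)) * α) - 1)))
        * (exp (-(lam * s / ∏ l, y l) / x) * (w (Fin.last n) - x) ^ (α - 1)
          * x ^ (-α - 1)) := by
  simp only [nfoldIntegrand, Fin.prod_univ_castSucc, Fin.snoc_castSucc, Fin.snoc_last,
    Fin.val_last, Fin.val_castSucc, Nat.cast_add, Nat.cast_one, neg_div, div_div]
  ring_nf

lemma nfoldValue_snoc {n : ℕ} {α lam s : ℝ} {w : Fin (n + 1) → ℝ} (hs : 0 < s)
    (hw : 0 < w (Fin.last n)) :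
    Gamma α * s ^ (-α) * w (Fin.last n) ^ (α - 1)
        * nfoldValue α lam (s / w (Fin.last n)) (fun l => w l.castSucc)
      = nfoldValue α lam s w := by
  have hs_div : (s / w (Fin.last n)) ^ (-(n : ℝ) * α)
      = s ^ (-(n : ℝ) * α) * w (Fin.last n) ^ ((n : ℝ) * α) := by
    rw [div_rpow hs.le hw.le, div_eq_mul_inv, ← rpow_neg hw.le, neg_mul, neg_neg]
  have hs_pow : s ^ (-α) * s ^ (-(n : ℝ) * α) = s ^ (-((n + 1 : ℕ) : ℝ) * α) := by
    rw [← rpow_add hs]; push_cast; ring_nf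
  have hw_pow : w (Fin.last n) ^ (α - 1) * w (Fin.last n) ^ ((n : ℝ) * α)
      = w (Fin.last n) ^ (((n : ℝ) + 1) * α - 1) := by
    rw [← rpow_add hw]; ring_nf
  have hexp : -(lam * (s / w (Fin.last n))) / ∏ l : Fin n, w l.castSucc
      = -(lam * s) / ((∏ l : Fin n, w l.castSucc) * w (Fin.last n)) := by
    field_simp
  simp only [nfoldValue, Fin.prod_univ_castSucc (f := w),
    Fin.prod_univ_castSucc (f := fun l : Fin (n + 1) => w l ^ ((((l : ℕ) : ℝ) + 1) * α - 1)),
    Fin.val_last, Fin.val_castSucc, hs_div, hexp, pow_succ, ← hs_pow, ← hw_pow]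
  ring

lemma lintegral_nfoldIntegrand_snoc {n : ℕ} {α lam s : ℝ} {w : Fin (n + 1) → ℝ} (hα : 0 < α)
    (hlam : 0 < lam) (hs : 0 < s) (hw : 0 < w (Fin.last n)) {y : Fin n → ℝ}
    (hy : y ∈ univ.pi fun l => Ioo 0 (w l.castSucc)) :
    ∫⁻ x in Ioo 0 (w (Fin.last n)),
        ENNReal.ofReal (nfoldIntegrand α lam s w (Fin.snoc y x))
      = ENNReal.ofReal (Gamma α * s ^ (-α) * w (Fin.last n) ^ (α - 1)
          * nfoldIntegrand α lam (s / w (Fin.last n)) (fun l => w l.castSucc) y) := by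
  simp only [mem_univ_pi, mem_Ioo] at hy
  have hy0 l : 0 < y l := (hy l).1
  have hP : 0 < ∏ l, y l := Finset.prod_pos fun l _ => hy0 l
  simp_rw [nfoldIntegrand_snoc]
  set c := lam * s / ∏ l, y l with hc_def
  set K := lam ^ (((n : ℝ) + 1) * α) * ∏ l : Fin n, ((w l.castSucc - y l) ^ (α - 1)
      * y l ^ (-(((n : ℝ) + 1 - ((l : ℕ) : ℝ)) * α) - 1)) with hK_def
  have hK : 0 ≤ K := mul_nonneg (rpow_nonneg hlam.le _) <| Finset.prod_nonneg fun l _ =>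
    mul_nonneg (rpow_nonneg (sub_nonneg.2 (hy l).2.le) _) (rpow_nonneg (hy0 l).le _)
  simp_rw [ENNReal.ofReal_mul hK]
  rw [lintegral_const_mul' _ _ ENNReal.ofReal_ne_top,
    lintegral_Ioo_exp_neg_div_mul_sub_rpow_mul_rpow hα (by positivity) hw,
    ← ENNReal.ofReal_mul hK]
  congr 1
  have hc_pow : c ^ (-α) = lam ^ (-α) * s ^ (-α) * ∏ l, y l ^ α := by
    rw [hc_def, div_rpow (by positivity) hP.le, mul_rpow hlam.le hs.le, div_eq_mul_inv,
      ← rpow_neg hP.le, neg_neg, finsetProd_rpow _ _ fun l _ => (hy0 l).le]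
  have hprod : (∏ l : Fin n, ((w l.castSucc - y l) ^ (α - 1)
        * y l ^ (-(((n : ℝ) + 1 - ((l : ℕ) : ℝ)) * α) - 1))) * ∏ l, y l ^ α
      = ∏ l : Fin n, ((w l.castSucc - y l) ^ (α - 1)
        * y l ^ (-(((n : ℝ) - ((l : ℕ) : ℝ)) * α) - 1)) := by
    rw [← Finset.prod_mul_distrib]
    refine Finset.prod_congr rfl fun l _ => ?_
    rw [mul_assoc, ← rpow_add (hy0 l)]
    ring_nf
  have hlam_pow : lam ^ (((n : ℝ) + 1) * α) * lam ^ (-α) = lam ^ ((n : ℝ) * α) := by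
    rw [← rpow_add hlam]; ring_nf
  have hexp : -c / w (Fin.last n) = -(lam * (s / w (Fin.last n))) / ∏ l, y l := by
    rw [hc_def]; field_simp
  rw [hK_def, hc_pow, hexp, nfoldIntegrand, ← hprod, ← hlam_pow]
  ring

lemma measurable_nfoldIntegrand {n : ℕ} (α lam s : ℝ) (w : Fin n → ℝ) :
    Measurable (nfoldIntegrand α lam s w) := by
  unfold nfoldIntegrand
  fun_prop

lemma nfoldIntegrand_nonneg {n : ℕ} {α lam s : ℝ} (hlam : 0 ≤ lam) {w r : Fin n → ℝ}
    (hr : r ∈ univ.pi fun l => Ioo 0 (w l)) : 0 ≤ nfoldIntegrand α lam s w r := by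
  simp only [mem_univ_pi, mem_Ioo] at hr
  exact mul_nonneg (mul_nonneg (rpow_nonneg hlam _) (exp_pos _).le) <| Finset.prod_nonneg
    fun l _ => mul_nonneg (rpow_nonneg (sub_nonneg.2 (hr l).2.le) _) (rpow_nonneg (hr l).1.le _)

lemma nfoldValue_nonneg {n : ℕ} {α lam s : ℝ} (hα : 0 < α) (hs : 0 < s) {w : Fin n → ℝ}
    (hw : ∀ l, 0 < w l) : 0 ≤ nfoldValue α lam s w := by
  unfold nfoldValue
  have := Gamma_pos_of_pos hα
  have : 0 ≤ ∏ l, w l ^ ((((l : ℕ) : ℝ) + 1) * α - 1) :=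
    Finset.prod_nonneg fun l _ => rpow_nonneg (hw l).le _
  positivity

theorem lintegral_nfoldIntegrand {α lam : ℝ} (hα : 0 < α) (hlam : 0 < lam) {n : ℕ} {s : ℝ}
    (hs : 0 < s) {w : Fin n → ℝ} (hw : ∀ l, 0 < w l) :
    ∫⁻ r in univ.pi fun l => Ioo 0 (w l), ENNReal.ofReal (nfoldIntegrand α lam s w r)
      = ENNReal.ofReal (nfoldValue α lam s w) := by
  induction n generalizing s with
  | zero => simp [nfoldIntegrand, nfoldValue, volume_pi]
  | succ n ih =>
    have hW := hw (Fin.last n)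
    rw [lintegral_univ_pi_eq_lintegral_lintegral_snoc _
        (measurable_nfoldIntegrand α lam s w).ennreal_ofReal,
      setLIntegral_congr_fun (MeasurableSet.univ_pi fun _ => measurableSet_Ioo)
        fun y hy => lintegral_nfoldIntegrand_snoc hα hlam hs hW hy]
    simp_rw [ENNReal.ofReal_mul
      (by positivity : 0 ≤ Gamma α * s ^ (-α) * w (Fin.last n) ^ (α - 1))]
    rw [lintegral_const_mul' _ _ ENNReal.ofReal_ne_top, ih (div_pos hs hW) fun l => hw _,
      ← ENNReal.ofReal_mul (by positivity), nfoldValue_snoc hs hW]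

theorem stmt3_general (α : ℝ) (hα : α ∈ Set.Ioo (0 : ℝ) 1) (n : ℕ)
    (s lam : ℝ) (hs : 0 < s) (hlam : 0 < lam)
    (w : Fin n → ℝ) (hw : ∀ l, 0 < w l ∧ w l ≤ 1) :
    ∫ r in Set.univ.pi (fun l : Fin n => Set.Ioo (0 : ℝ) (w l)),
        lam ^ ((n : ℝ) * α) * Real.exp (-(lam * s) / ∏ l, r l) *
          ∏ l, ((w l - r l) ^ (α - 1) * r l ^ (-(((n : ℝ) - ((l : ℕ) : ℝ)) * α) - 1))
      = Real.Gamma α ^ n * s ^ (-(n : ℝ) * α) * Real.exp (-(lam * s) / ∏ l, w l) *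
          ∏ l, w l ^ ((((l : ℕ) : ℝ) + 1) * α - 1) := by
  change ∫ r in _, nfoldIntegrand α lam s w r = nfoldValue α lam s w
  have hw_pos l := (hw l).1
  rw [integral_eq_lintegral_of_nonneg_ae
      (ae_restrict_of_forall_mem (MeasurableSet.univ_pi fun _ => measurableSet_Ioo)
        fun r hr => nfoldIntegrand_nonneg hlam.le hr)
      (measurable_nfoldIntegrand α lam s w).aestronglyMeasurable,
    lintegral_nfoldIntegrand hα.1 hlam hs hw_pos,
    ENNReal.toReal_ofReal (nfoldValue_nonneg hα.1 hs hw_pos)]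

/-- **Proposition 2 (the n-fold integral identity).** For `α ∈ (0,1)`, `n ≥ 1`,
positive `s, λ` and `0 < w_l ≤ 1`, the `n`-fold integral over `∏_l (0, w_l)` of
`λ^{nα} e^{-λ s/∏ r_l} ∏_l (w_l - r_l)^{α-1} r_l^{-(n-l+1)α-1}` equals
`Γ(α)^n s^{-nα} e^{-λ s/∏ w_l} ∏_l w_l^{lα-1}` (indices `l` are 1-based in the paper,
0-based here). -/
theorem stmt3 (α : ℝ) (hα : α ∈ Set.Ioo (0 : ℝ) 1) (n : ℕ) (hn : 1 ≤ n)
    (s lam : ℝ) (hs : 0 < s) (hlam : 0 < lam)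
    (w : Fin n → ℝ) (hw : ∀ l, 0 < w l ∧ w l ≤ 1) :
    ∫ r in Set.univ.pi (fun l : Fin n => Set.Ioo (0 : ℝ) (w l)),
        lam ^ ((n : ℝ) * α) * Real.exp (-(lam * s) / ∏ l, r l) *
          ∏ l, ((w l - r l) ^ (α - 1) * r l ^ (-(((n : ℝ) - ((l : ℕ) : ℝ)) * α) - 1))
      = Real.Gamma α ^ n * s ^ (-(n : ℝ) * α) * Real.exp (-(lam * s) / ∏ l, w l) *
          ∏ l, w l ^ ((((l : ℕ) : ℝ) + 1) * α - 1) :=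
  stmt3_general α hα n s lam hs hlam w hw
end

section
/- Fix α ∈ (0,1). Let f_α : (0,∞) → [0,∞) be a measurable function with ∫₀^∞ f_α(t) dt = 1 and ∫₀^∞ e^{-λ t} f_α(t) dt = e^{-λ^α} for all λ ≥ 0. Then for every integer m ≥ 1 and every λ > 0, ∫₀^∞ t^m e^{-λ t} f_α(t) dt = α e^{-λ^α} λ^{α-m} Ω_m(λ^α). In particular ∫₀^∞ t e^{-λ t} f_α(t) dt = α λ^{α-1} e^{-λ^α}. -/
/-!
Differentiating the Laplace transform `∫ e^{-λt} f_α(t) dt = e^{-λ^α}` under the integral sign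
(legitimate for `λ > 0`: `e^{-λt} f_α` is integrable because its integral is not `0`, and
`t^m e^{-λt} ≤ m! (2/λ)^m e^{-λt/2}`) gives
`∫ t^m e^{-λt} f_α = (-d/dλ)^m e^{-λ^α}`. Differentiating `e^{-λ^α} Σ_k α^k S_α(m,k) λ^{αk-m}`
produces the same sum with the coefficients `S_α(m,k-1) + (m - αk) S_α(m,k)`, which is the
triangular recurrence of `S_α(m+1,k)`; so by induction on `m` this sum is the `m`-th moment, and
`Ω_m` is the same sum after factoring out `α e^{-λ^α} λ^{α-m}`.
-/

open MeasureTheory Set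

/-- The rising factorial `(x)_m = x (x+1) ⋯ (x+m-1)`. -/
noncomputable def risingFactorial (x : ℝ) (m : ℕ) : ℝ := ∏ i ∈ Finset.range m, (x + i)

/-- The generalized Stirling number
`S_α(m,k) = (1/(α^k k!)) Σ_{j=1}^k (-1)^j C(k,j) (-jα)_m`. -/
noncomputable def genStirling (α : ℝ) (m k : ℕ) : ℝ :=
  (1 / (α ^ k * (Nat.factorial k : ℝ))) *
    ∑ j ∈ Finset.Icc 1 k, (-1 : ℝ) ^ j * (Nat.choose k j : ℝ) * risingFactorial (-(j : ℝ) * α) m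

/-- `P_α^{(m)}(k) = α^{k-1} Γ(k) S_α(m,k) / Γ(m)`. -/
noncomputable def Pstat (α : ℝ) (m k : ℕ) : ℝ :=
  α ^ ((k : ℝ) - 1) * Real.Gamma (k : ℝ) * genStirling α m k / Real.Gamma (m : ℝ)

/-- `Ω_m(x) = Γ(m) Σ_{ℓ=1}^m P_α^{(m)}(ℓ) x^{ℓ-1}/Γ(ℓ)` for `m ≥ 1`, and `Ω_0(x) = x⁻¹/α`. -/
noncomputable def Omega (α : ℝ) (m : ℕ) (x : ℝ) : ℝ :=
  if m = 0 then x⁻¹ / α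
  else Real.Gamma (m : ℝ) * ∑ ℓ ∈ Finset.Icc 1 m, Pstat α m ℓ * x ^ (ℓ - 1) / Real.Gamma (ℓ : ℝ)

open Finset Real
open scoped Nat

lemma risingFactorial_succ (x : ℝ) (m : ℕ) :
    risingFactorial x (m + 1) = risingFactorial x m * (x + m) :=
  prod_range_succ _ _

lemma risingFactorial_zero_left {m : ℕ} (hm : m ≠ 0) : risingFactorial 0 m = 0 :=
  prod_eq_zero (mem_range.2 (Nat.pos_of_ne_zero hm)) (by simp)

/-- `α ^ k * k ! * genStirling α m k` when `m ≠ 0` (the `j = 0` term vanishes). Up to sign this is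
the `k`-th forward difference at `0` of the degree-`m` polynomial `j ↦ (-jα)_m`, hence it vanishes
for `k > m`. -/
noncomputable def genStirlingSum (α : ℝ) (m k : ℕ) : ℝ :=
  ∑ j ∈ range (k + 1), (-1 : ℝ) ^ j * k.choose j * risingFactorial (-(j : ℝ) * α) m

lemma genStirlingSum_zero_left {k : ℕ} (hk : k ≠ 0) (α : ℝ) : genStirlingSum α 0 k = 0 := by
  have h := congrArg (Int.cast : ℤ → ℝ) (Int.alternating_sum_range_choose_of_ne hk)
  push_cast at h
  simpa [genStirlingSum, risingFactorial] using h

lemma cast_choose_succ_mul_sub (n j : ℕ) (hj : j ≤ n + 1) :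
    ((n + 1 : ℕ).choose j : ℝ) * ((n : ℝ) + 1 - j) = n.choose j * (n + 1) := by
  have h := congrArg (Nat.cast : ℕ → ℝ) (Nat.choose_mul_succ_eq n j)
  push_cast [Nat.cast_sub hj] at h
  exact h.symm

lemma genStirlingSum_succ (α : ℝ) (m n : ℕ) :
    genStirlingSum α (m + 1) (n + 1) =
      α * (n + 1) * genStirlingSum α m n + (m - α * (n + 1)) * genStirlingSum α m (n + 1) := by
  have hterm : ∀ j ∈ range (n + 2),
      (-1 : ℝ) ^ j * (n + 1).choose j * risingFactorial (-(j : ℝ) * α) (m + 1) =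
        α * (n + 1) * ((-1 : ℝ) ^ j * n.choose j * risingFactorial (-(j : ℝ) * α) m) +
        (m - α * (n + 1)) *
          ((-1 : ℝ) ^ j * (n + 1).choose j * risingFactorial (-(j : ℝ) * α) m) := by
    intro j hj
    have h := cast_choose_succ_mul_sub n j (Nat.lt_succ_iff.1 (mem_range.1 hj))
    rw [risingFactorial_succ]
    linear_combination α * (-1 : ℝ) ^ j * risingFactorial (-(j : ℝ) * α) m * h
  rw [genStirlingSum, sum_congr rfl hterm, sum_add_distrib, ← mul_sum, ← mul_sum,
    sum_range_succ _ (n + 1), Nat.choose_succ_self]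
  simp [genStirlingSum]

lemma genStirlingSum_eq_zero_of_lt (α : ℝ) {m k : ℕ} (hmk : m < k) : genStirlingSum α m k = 0 := by
  induction m generalizing k with
  | zero => exact genStirlingSum_zero_left hmk.ne' α
  | succ m ih =>
    obtain ⟨n, rfl⟩ := Nat.exists_eq_add_one_of_ne_zero (by omega : k ≠ 0)
    rw [genStirlingSum_succ, ih (by omega), ih (by omega)]
    ring

lemma genStirling_eq_genStirlingSum (α : ℝ) {m : ℕ} (hm : m ≠ 0) (k : ℕ) :
    genStirling α m k = genStirlingSum α m k / (α ^ k * k !) := by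
  rw [genStirling, genStirlingSum, sum_range_succ', ← Finset.Ico_add_one_right_eq_Icc,
    sum_Ico_eq_sum_range]
  simp [risingFactorial_zero_left hm, add_comm 1, div_eq_inv_mul]

lemma genStirling_zero_right (α : ℝ) (m : ℕ) : genStirling α m 0 = 0 := by
  simp [genStirling]

lemma genStirling_eq_zero_of_lt (α : ℝ) {m k : ℕ} (hm : m ≠ 0) (hmk : m < k) :
    genStirling α m k = 0 := by
  rw [genStirling_eq_genStirlingSum α hm, genStirlingSum_eq_zero_of_lt α hmk, zero_div]

lemma genStirling_one_one {α : ℝ} (hα : α ≠ 0) : genStirling α 1 1 = 1 := by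
  simp [genStirling, risingFactorial, hα]

lemma genStirling_succ {α : ℝ} (hα : α ≠ 0) {m : ℕ} (hm : m ≠ 0) (n : ℕ) :
    genStirling α (m + 1) (n + 1) =
      genStirling α m n + (m - α * (n + 1)) * genStirling α m (n + 1) := by
  simp only [genStirling_eq_genStirlingSum α hm, genStirling_eq_genStirlingSum α m.succ_ne_zero,
    genStirlingSum_succ, Nat.factorial_succ]
  push_cast
  field_simp
  ring

/-- The closed form of `(-d/dλ)^m e^{-λ^α}`, i.e. of the moment `∫ t^m e^{-λ t} f_α(t) dt`. -/
noncomputable def stableMoment (α : ℝ) (m : ℕ) (l : ℝ) : ℝ :=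
  exp (-(l ^ α)) * ∑ k ∈ range m,
    α ^ (k + 1) * genStirling α m (k + 1) * l ^ (α * (k + 1) - m)

lemma stableMoment_one {α : ℝ} (hα : α ≠ 0) (l : ℝ) :
    stableMoment α 1 l = α * l ^ (α - 1) * exp (-(l ^ α)) := by
  simp only [stableMoment, range_one, sum_singleton, Nat.cast_one, CharP.cast_eq_zero, zero_add,
    pow_one, mul_one, genStirling_one_one hα]
  ring

lemma stableMoment_eq_Omega {α : ℝ} (hα : α ≠ 0) {m : ℕ} (hm : m ≠ 0) {l : ℝ} (hl : 0 < l) :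
    stableMoment α m l = α * exp (-(l ^ α)) * l ^ (α - m) * Omega α m (l ^ α) := by
  have hΓ : ∀ {n : ℕ}, n ≠ 0 → Gamma n ≠ 0 := fun hn =>
    (Gamma_pos_of_pos (Nat.cast_pos.2 (Nat.pos_of_ne_zero hn))).ne'
  rw [Omega, if_neg hm, ← Finset.Ico_add_one_right_eq_Icc, sum_Ico_eq_sum_range, stableMoment,
    add_tsub_cancel_right, mul_sum, mul_sum, mul_sum]
  refine sum_congr rfl fun k _ => ?_
  have hαk : α * α ^ ((((1 + k : ℕ)) : ℝ) - 1) = α ^ (k + 1) := by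
    rw [rpow_sub_one hα, rpow_natCast]; field_simp; ring
  have hlk : l ^ (α - m) * (l ^ α) ^ (1 + k - 1) = l ^ (α * (k + 1) - m) := by
    rw [add_tsub_cancel_left, ← rpow_natCast, ← rpow_mul hl.le, ← rpow_add hl]
    ring_nf
  rw [Pstat, ← hαk, ← hlk, add_comm 1 k]
  field_simp [hΓ hm, hΓ k.succ_ne_zero]

lemma stableMoment_succ {α : ℝ} (hα : α ≠ 0) {m : ℕ} (hm : m ≠ 0) (l : ℝ) :
    stableMoment α (m + 1) l = exp (-(l ^ α)) * ∑ k ∈ range m,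
      α ^ (k + 1) * genStirling α m (k + 1) *
        (α * l ^ (α * (k + 1) - m - 1 + α) - (α * (k + 1) - m) * l ^ (α * (k + 1) - m - 1)) := by
  have hsplit : ∀ k ∈ range (m + 1),
      α ^ (k + 1) * genStirling α (m + 1) (k + 1) * l ^ (α * (k + 1) - (m + 1 : ℕ)) =
        α ^ (k + 1) * genStirling α m k * l ^ (α * (k + 1) - (m + 1 : ℕ)) +
        α ^ (k + 1) * (m - α * (k + 1)) * genStirling α m (k + 1) *
          l ^ (α * (k + 1) - (m + 1 : ℕ)) := fun k _ => by
    rw [genStirling_succ hα hm]; ring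
  rw [stableMoment, sum_congr rfl hsplit, sum_add_distrib, sum_range_succ', sum_range_succ _ m,
    genStirling_zero_right, genStirling_eq_zero_of_lt α hm m.lt_succ_self]
  simp only [mul_zero, zero_mul, add_zero]
  rw [← sum_add_distrib]
  congr 1
  refine sum_congr rfl fun k _ => ?_
  push_cast
  rw [show α * (k + 1 + 1) - (m + 1) = α * (k + 1) - m - 1 + α by ring,
    show α * (k + 1) - (m + 1) = α * (k + 1) - m - 1 by ring]
  ring

lemma hasDerivAt_exp_neg_rpow {α : ℝ} (hα : α ≠ 0) {l : ℝ} (hl : 0 < l) :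
    HasDerivAt (fun x => exp (-(x ^ α))) (-stableMoment α 1 l) l := by
  refine ((hasDerivAt_rpow_const (p := α) (Or.inl hl.ne')).neg.exp).congr_deriv ?_
  rw [stableMoment_one hα, Pi.neg_apply]
  ring

lemma hasDerivAt_exp_neg_rpow_mul_rpow (α β : ℝ) {l : ℝ} (hl : 0 < l) :
    HasDerivAt (fun x => exp (-(x ^ α)) * x ^ β)
      (exp (-(l ^ α)) * (β * l ^ (β - 1) - α * l ^ (β - 1 + α))) l := by
  refine (((hasDerivAt_rpow_const (p := α) (Or.inl hl.ne')).neg.exp).mul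
    (hasDerivAt_rpow_const (p := β) (Or.inl hl.ne'))).congr_deriv ?_
  simp only [Pi.neg_apply, rpow_add hl, rpow_sub_one hl.ne']
  ring

lemma hasDerivAt_stableMoment {α : ℝ} (hα : α ≠ 0) {m : ℕ} (hm : m ≠ 0) {l : ℝ} (hl : 0 < l) :
    HasDerivAt (stableMoment α m) (-stableMoment α (m + 1) l) l := by
  have hsum : stableMoment α m = fun x => ∑ k ∈ range m,
      α ^ (k + 1) * genStirling α m (k + 1) * (exp (-(x ^ α)) * x ^ (α * (k + 1) - m)) := by
    ext x; rw [stableMoment, mul_sum]; exact sum_congr rfl fun k _ => by ring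
  rw [hsum, stableMoment_succ hα hm, mul_sum, ← sum_neg_distrib]
  refine HasDerivAt.fun_sum fun k _ => ?_
  refine ((hasDerivAt_exp_neg_rpow_mul_rpow α (α * (k + 1) - m) hl).const_mul
    (α ^ (k + 1) * genStirling α m (k + 1))).congr_deriv ?_
  ring

lemma pow_mul_exp_neg_mul_le {c t : ℝ} (hc : 0 < c) (ht : 0 ≤ t) (m : ℕ) :
    t ^ m * exp (-c * t) ≤ m ! / c ^ m := by
  have h := Real.pow_div_factorial_le_exp (x := c * t) (mul_nonneg hc.le ht) m
  rw [div_le_iff₀ (by positivity), mul_pow] at h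
  rw [le_div_iff₀ (by positivity), neg_mul, exp_neg]
  calc t ^ m * (exp (c * t))⁻¹ * c ^ m = c ^ m * t ^ m * (exp (c * t))⁻¹ := by ring
    _ ≤ exp (c * t) * m ! * (exp (c * t))⁻¹ := by gcongr
    _ = m ! := by field_simp

lemma integrableOn_pow_mul_exp_neg_mul {f : ℝ → ℝ}
    (hf : ∀ c, 0 < c → IntegrableOn (fun t => exp (-c * t) * f t) (Ioi 0))
    (m : ℕ) {c : ℝ} (hc : 0 < c) :
    IntegrableOn (fun t => t ^ m * exp (-c * t) * f t) (Ioi 0) := by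
  have hsplit : (fun t => t ^ m * exp (-c * t) * f t) =
      fun t => t ^ m * exp (-(c / 2) * t) * (exp (-(c / 2) * t) * f t) := by
    ext t
    rw [show exp (-c * t) = exp (-(c / 2) * t) * exp (-(c / 2) * t) by rw [← exp_add]; ring_nf]
    ring
  rw [hsplit]
  refine (hf (c / 2) (half_pos hc)).bdd_mul (c := m ! / (c / 2) ^ m) (by fun_prop) ?_
  refine (ae_restrict_iff' measurableSet_Ioi).2 (Filter.Eventually.of_forall fun t ht => ?_)
  rw [norm_of_nonneg (mul_nonneg (pow_nonneg (le_of_lt ht) m) (exp_pos _).le)]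
  exact pow_mul_exp_neg_mul_le (half_pos hc) (le_of_lt ht) m

lemma hasDerivAt_integral_pow_mul_exp_neg_mul {f : ℝ → ℝ}
    (hf : ∀ c, 0 < c → IntegrableOn (fun t => exp (-c * t) * f t) (Ioi 0))
    (m : ℕ) {l : ℝ} (hl : 0 < l) :
    HasDerivAt (fun c => ∫ t in Ioi 0, t ^ m * exp (-c * t) * f t)
      (-∫ t in Ioi 0, t ^ (m + 1) * exp (-l * t) * f t) l := by
  have hball : Metric.ball l (l / 2) ⊆ Ioi (l / 2) := fun c hc => by
    rw [Metric.mem_ball, dist_eq, abs_lt] at hc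
    exact show l / 2 < c by linarith [hc.1]
  have hint := integrableOn_pow_mul_exp_neg_mul hf
  rw [← integral_neg]
  refine (hasDerivAt_integral_of_dominated_loc_of_deriv_le
    (F' := fun c t => -(t ^ (m + 1) * exp (-c * t) * f t))
    (bound := fun t => ‖t ^ (m + 1) * exp (-(l / 2) * t) * f t‖)
    (Metric.ball_mem_nhds l (half_pos hl))
    (Filter.eventually_of_mem (Ioi_mem_nhds hl) fun c hc => (hint m hc).aestronglyMeasurable)
    (hint m hl) (hint (m + 1) hl).aestronglyMeasurable.neg ?_
    (hint (m + 1) (half_pos hl)).norm ?_).2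
  · refine (ae_restrict_iff' measurableSet_Ioi).2 (Filter.Eventually.of_forall fun t ht c hc => ?_)
    have ht : 0 < t := ht
    rw [norm_neg, norm_mul, norm_mul, norm_mul, norm_mul, norm_of_nonneg (exp_pos _).le,
      norm_of_nonneg (exp_pos _).le]
    gcongr
    nlinarith [mem_Ioi.1 (hball hc)]
  · refine Filter.Eventually.of_forall fun t c _ => ?_
    refine ((((hasDerivAt_id c).neg.mul_const t).exp.const_mul (t ^ m)).mul_const
      (f t)).congr_deriv ?_
    simp only [Pi.neg_apply, id]
    ring

lemma eqOn_Ioi_of_hasDerivAt_neg {F G F₁ G₁ : ℝ → ℝ}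
    (hF : ∀ l, 0 < l → HasDerivAt F (-F₁ l) l) (hG : ∀ l, 0 < l → HasDerivAt G (-G₁ l) l)
    (h : EqOn F G (Ioi 0)) : EqOn F₁ G₁ (Ioi 0) := fun l hl =>
  neg_injective <| ((hF l hl).congr_of_eventuallyEq
    (Filter.eventually_of_mem (Ioi_mem_nhds hl) fun _ hx => (h hx).symm)).unique (hG l hl)

theorem stmt4_general (α : ℝ) (hα : α ∈ Set.Ioo (0 : ℝ) 1) (f : ℝ → ℝ)
    (hflap : ∀ c : ℝ, 0 ≤ c →
      ∫ t in Set.Ioi (0 : ℝ), Real.exp (-c * t) * f t = Real.exp (-(c ^ α))) :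
    (∀ m : ℕ, 1 ≤ m → ∀ lam : ℝ, 0 < lam →
        ∫ t in Set.Ioi (0 : ℝ), t ^ m * Real.exp (-lam * t) * f t
          = α * Real.exp (-(lam ^ α)) * lam ^ (α - (m : ℝ)) * Omega α m (lam ^ α)) ∧
      (∀ lam : ℝ, 0 < lam →
        ∫ t in Set.Ioi (0 : ℝ), t * Real.exp (-lam * t) * f t
          = α * lam ^ (α - 1) * Real.exp (-(lam ^ α))) := by
  have hα0 : α ≠ 0 := hα.1.ne'
  have hint (c : ℝ) (hc : 0 < c) : IntegrableOn (fun t => exp (-c * t) * f t) (Ioi 0) :=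
    Integrable.of_integral_ne_zero (by rw [hflap c hc.le]; exact (exp_pos _).ne')
  have hmoment : ∀ m, 1 ≤ m →
      EqOn (fun l => ∫ t in Ioi 0, t ^ m * exp (-l * t) * f t) (stableMoment α m) (Ioi 0) := by
    intro m hm
    induction m, hm using Nat.le_induction with
    | base =>
      refine eqOn_Ioi_of_hasDerivAt_neg (fun _ => hasDerivAt_integral_pow_mul_exp_neg_mul hint 0)
        (fun _ => hasDerivAt_exp_neg_rpow hα0) fun c hc => ?_
      simpa using hflap c (le_of_lt hc)
    | succ m hm ih =>
      exact eqOn_Ioi_of_hasDerivAt_neg (fun _ => hasDerivAt_integral_pow_mul_exp_neg_mul hint m)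
        (fun _ => hasDerivAt_stableMoment hα0 (by omega)) ih
  refine ⟨fun m hm lam hlam => ?_, fun lam hlam => ?_⟩
  · exact (hmoment m hm hlam).trans (stableMoment_eq_Omega hα0 (by omega) hlam)
  · simpa [stableMoment_one hα0] using hmoment 1 le_rfl hlam

/-- **Moment formula (eq. (momentrep)).** If `f_α` is the density of a positive `α`-stable
random variable, then for `m ≥ 1` and `λ > 0`,
`∫₀^∞ t^m e^{-λ t} f_α(t) dt = α e^{-λ^α} λ^{α-m} Ω_m(λ^α)`; in particular
`∫₀^∞ t e^{-λ t} f_α(t) dt = α λ^{α-1} e^{-λ^α}`. -/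
theorem stmt4 (α : ℝ) (hα : α ∈ Set.Ioo (0 : ℝ) 1) (f : ℝ → ℝ) (hfmeas : Measurable f)
    (hfnn : ∀ t ∈ Set.Ioi (0 : ℝ), 0 ≤ f t)
    (hfint : ∫ t in Set.Ioi (0 : ℝ), f t = 1)
    (hflap : ∀ c : ℝ, 0 ≤ c →
      ∫ t in Set.Ioi (0 : ℝ), Real.exp (-c * t) * f t = Real.exp (-(c ^ α))) :
    (∀ m : ℕ, 1 ≤ m → ∀ lam : ℝ, 0 < lam →
        ∫ t in Set.Ioi (0 : ℝ), t ^ m * Real.exp (-lam * t) * f t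
          = α * Real.exp (-(lam ^ α)) * lam ^ (α - (m : ℝ)) * Omega α m (lam ^ α)) ∧
      (∀ lam : ℝ, 0 < lam →
        ∫ t in Set.Ioi (0 : ℝ), t * Real.exp (-lam * t) * f t
          = α * lam ^ (α - 1) * Real.exp (-(lam ^ α))) :=
  stmt4_general α hα f hflap
end

section
/- Fix α ∈ (0,1) and λ > 0. Let E₁ be a random variable with the Exp(1) distribution and set R₁ = (λ^α/(E₁ + λ^α))^{1/α}. Then R₁ takes values in (0,1) and its law has Lebesgue density r ↦ α λ^α e^{λ^α} e^{-λ^α/r^α} r^{-α-1} on (0,1). -/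
/-!
With `c = λ^α`, the map `t ↦ (c/(t+c))^{1/α}` is a bijection from `(0,∞)` onto `(0,1)` with
inverse `ψ r = c r^{-α} - c`. By the one-dimensional change of variables, the image of the law
with density `g` on `(0,∞)` has density `|ψ'| · g ∘ ψ` on `(0,1)`; for `g t = e^{-t}` this is
`α c r^{-α-1} e^{c - c/r^α}`.
-/

open MeasureTheory Set

/-- The Exp(1) distribution, with density `e^{-t}` on `(0,∞)`. -/
noncomputable def expM : Measure ℝ :=
  volume.withDensity ((Set.Ioi (0 : ℝ)).indicator fun t => ENNReal.ofReal (Real.exp (-t)))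

theorem map_restrict_withDensity_eq_of_invOn {s t : Set ℝ} {φ ψ ψ' : ℝ → ℝ}
    (ht : MeasurableSet t) (hφ : Measurable φ) (hinv : InvOn φ ψ t s) (hψt : MapsTo ψ t s)
    (hφs : MapsTo φ s t) (hψ' : ∀ r ∈ t, HasDerivWithinAt ψ (ψ' r) t r) (g : ℝ → ENNReal) :
    ((volume.restrict s).withDensity g).map φ
      = (volume.restrict t).withDensity fun r => ENNReal.ofReal |ψ' r| * g (ψ r) := by
  have hbij : BijOn ψ t s := hinv.bijOn hψt hφs
  ext A hA
  have himage : ψ '' (A ∩ t) = φ ⁻¹' A ∩ s := by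
    rw [hinv.1.image_inter', hbij.image_eq]
  rw [Measure.map_apply hφ hA, withDensity_apply _ (hφ hA), Measure.restrict_restrict (hφ hA),
    withDensity_apply _ hA, Measure.restrict_restrict hA, ← himage,
    lintegral_image_eq_lintegral_abs_deriv_mul (hA.inter ht)
      (fun r hr => (hψ' r hr.2).mono inter_subset_right) (hbij.injOn.mono inter_subset_right)]

section

variable {α c : ℝ}

theorem mapsTo_rpow_div_add (hα : 0 < α) (hc : 0 < c) :
    MapsTo (fun t => (c / (t + c)) ^ (1 / α)) (Ioi 0) (Ioo 0 1) := by
  intro t (ht : 0 < t)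
  have hdiv : 0 < c / (t + c) := by positivity
  exact ⟨by positivity, Real.rpow_lt_one hdiv.le ((div_lt_one (by positivity)).2 (by linarith))
    (by positivity)⟩

theorem mapsTo_mul_rpow_neg_sub (hα : 0 < α) (hc : 0 < c) :
    MapsTo (fun r => c * r ^ (-α) - c) (Ioo 0 1) (Ioi 0) := by
  intro r ⟨hr0, hr1⟩
  have : 1 < r ^ (-α) := Real.one_lt_rpow_of_pos_of_lt_one_of_neg hr0 hr1 (by linarith)
  show 0 < c * r ^ (-α) - c
  nlinarith

theorem invOn_rpow_div_add (hα : 0 < α) (hc : 0 < c) :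
    InvOn (fun t => (c / (t + c)) ^ (1 / α)) (fun r => c * r ^ (-α) - c) (Ioo 0 1) (Ioi 0) := by
  constructor
  · intro r ⟨hr0, _⟩
    have : c / (c * r ^ (-α) - c + c) = r ^ α := by
      rw [sub_add_cancel, Real.rpow_neg hr0.le]; field_simp
    simp only [this, one_div, Real.rpow_rpow_inv hr0.le hα.ne']
  · intro t (ht : 0 < t)
    have hdiv : 0 < c / (t + c) := by positivity
    have : ((c / (t + c)) ^ (1 / α)) ^ (-α) = (t + c) / c := by
      rw [← Real.rpow_mul hdiv.le, show 1 / α * -α = -1 by field_simp, Real.rpow_neg_one, inv_div]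
    simp only [this]
    field_simp
    ring

theorem ofReal_abs_deriv_mul_exp (hα : 0 < α) (hc : 0 < c) {r : ℝ} (hr : 0 < r) :
    ENNReal.ofReal |c * (-α * r ^ (-α - 1))| * ENNReal.ofReal (Real.exp (-(c * r ^ (-α) - c)))
      = ENNReal.ofReal (α * c * Real.exp c * Real.exp (-c / r ^ α) * r ^ (-α - 1)) := by
  rw [← ENNReal.ofReal_mul (abs_nonneg _)]
  congr 1
  have hneg : c * (-α * r ^ (-α - 1)) < 0 := by
    have : 0 < c * (α * r ^ (-α - 1)) := by positivity
    linarith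
  rw [abs_of_neg hneg, Real.rpow_neg hr.le, show -(c * (r ^ α)⁻¹ - c) = c + -c / r ^ α by ring,
    Real.exp_add]
  ring

end

/-- **Lemma 2(i).** For `E₁ ~ Exp(1)` and `R₁ = (λ^α/(E₁ + λ^α))^{1/α}`, the variable `R₁`
takes values in `(0,1)` and its law has Lebesgue density
`r ↦ α λ^α e^{λ^α} e^{-λ^α/r^α} r^{-α-1}` on `(0,1)`. -/
theorem stmt6 (α : ℝ) (hα : α ∈ Set.Ioo (0 : ℝ) 1) (lam : ℝ) (hlam : 0 < lam) :
    (∀ᵐ t ∂expM, (lam ^ α / (t + lam ^ α)) ^ (1 / α) ∈ Set.Ioo (0 : ℝ) 1) ∧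
      Measure.map (fun t => (lam ^ α / (t + lam ^ α)) ^ (1 / α)) expM
        = volume.withDensity ((Set.Ioo (0 : ℝ) 1).indicator fun r =>
            ENNReal.ofReal (α * lam ^ α * Real.exp (lam ^ α) *
              Real.exp (-(lam ^ α) / r ^ α) * r ^ (-α - 1))) := by
  obtain ⟨hα, -⟩ := hα
  have hc : 0 < lam ^ α := by positivity
  rw [expM, withDensity_indicator measurableSet_Ioi]
  refine ⟨(withDensity_absolutelyContinuous _ _).ae_le
    ((ae_restrict_mem measurableSet_Ioi).mono fun t ht => mapsTo_rpow_div_add hα hc ht), ?_⟩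
  rw [withDensity_indicator measurableSet_Ioo, map_restrict_withDensity_eq_of_invOn
    measurableSet_Ioo (by fun_prop) (invOn_rpow_div_add hα hc) (mapsTo_mul_rpow_neg_sub hα hc)
    (mapsTo_rpow_div_add hα hc)
    (fun r hr => (((Real.hasDerivAt_rpow_const (Or.inl hr.1.ne')).const_mul _).sub_const _)
      |>.hasDerivWithinAt)]
  exact withDensity_congr_ae (ae_restrict_of_forall_mem measurableSet_Ioo fun r hr =>
    ofReal_abs_deriv_mul_exp hα hc hr.1)
end

section
/- Fix α ∈ (0,1), θ > 0 and an integer n ≥ 1. Let G be a random variable with the Gamma(θ/α) distribution and let E₁,…,E_n be Exp(1) random variables, with G, E₁,…,E_n independent; set G̃₀ = 0 and G̃_k = E₁ + ⋯ + E_k, and define R_k = ((G + G̃_{k-1})/(G + G̃_k))^{1/α} for k = 1,…,n. Then R₁,…,R_n are independent and R_k has the Beta(θ + (k-1)α, 1) distribution for each k; equivalently, the joint law of (R₁,…,R_n) has Lebesgue density (r₁,…,r_n) ↦ ∏_{k=1}^n (θ + (k-1)α) r_k^{θ + (k-1)α - 1} on (0,1)^n. -/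
/-! If `G ~ Gamma(a)` and `E ~ Exp(1)` are independent, then `G/(G+E) ~ Beta(a,1)` and
`G + E ~ Gamma(a+1)` are independent (the beta–gamma algebra, a change of variables `x = s u` in
the joint density), and `u ↦ u^{1/α}` sends `Beta(a,1)` to `Beta(aα,1)`. Applied with `a = θ/α`
this makes `R₁ = (G/(G+E₁))^{1/α} ~ Beta(θ,1)` independent of `G + E₁ ~ Gamma(θ/α + 1)`, and
`R₂,…,R_n` are the same construction started from `G + E₁` with `E₂,…,E_n`; induct on `n`. -/

open MeasureTheory Set

/-- The Gamma(a) distribution (rate 1), with density `t^{a-1} e^{-t}/Γ(a)` on `(0,∞)`. -/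
noncomputable def gammaM (a : ℝ) : Measure ℝ :=
  volume.withDensity ((Set.Ioi (0 : ℝ)).indicator fun t =>
    ENNReal.ofReal (t ^ (a - 1) * Real.exp (-t) / Real.Gamma a))

open scoped ENNReal

noncomputable def expDensity : ℝ → ℝ≥0∞ :=
  (Ioi (0 : ℝ)).indicator fun t => ENNReal.ofReal (Real.exp (-t))

noncomputable def gammaDensity (a : ℝ) : ℝ → ℝ≥0∞ :=
  (Ioi (0 : ℝ)).indicator fun t => ENNReal.ofReal (t ^ (a - 1) * Real.exp (-t) / Real.Gamma a)

noncomputable def betaDensity (b : ℝ) : ℝ → ℝ≥0∞ :=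
  (Ioo (0 : ℝ) 1).indicator fun r => ENNReal.ofReal (b * r ^ (b - 1))

noncomputable def betaM (b : ℝ) : Measure ℝ :=
  volume.withDensity (betaDensity b)

lemma expM_eq : expM = volume.withDensity expDensity := rfl

lemma gammaM_eq (a : ℝ) : gammaM a = volume.withDensity (gammaDensity a) := rfl

@[fun_prop]
lemma measurable_expDensity : Measurable expDensity := by
  unfold expDensity; fun_prop (disch := measurability)

@[fun_prop]
lemma measurable_gammaDensity (a : ℝ) : Measurable (gammaDensity a) := by
  unfold gammaDensity; fun_prop (disch := measurability)

@[fun_prop]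
lemma measurable_betaDensity (b : ℝ) : Measurable (betaDensity b) := by
  unfold betaDensity; fun_prop (disch := measurability)

lemma indicator_ofReal_ne_top {X : Type*} (s : Set X) (g : X → ℝ) (x : X) :
    s.indicator (fun x => ENNReal.ofReal (g x)) x ≠ ∞ := by
  by_cases hx : x ∈ s <;> simp [hx]

instance : SigmaFinite expM := SigmaFinite.withDensity_of_ne_top' (indicator_ofReal_ne_top _ _)
instance (a : ℝ) : SigmaFinite (gammaM a) :=
  SigmaFinite.withDensity_of_ne_top' (indicator_ofReal_ne_top _ _)
instance (b : ℝ) : SigmaFinite (betaM b) :=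
  SigmaFinite.withDensity_of_ne_top' (indicator_ofReal_ne_top _ _)

lemma gammaM_eq_gammaMeasure (a : ℝ) : gammaM a = ProbabilityTheory.gammaMeasure a 1 := by
  refine withDensity_congr_ae ?_
  filter_upwards [volume.ae_ne 0] with x hx
  rcases lt_or_gt_of_ne hx with h | h
  · simp [indicator_of_notMem (show x ∉ Ioi 0 from not_lt.2 h.le),
      ProbabilityTheory.gammaPDF_of_neg h]
  · simp [indicator_of_mem (show x ∈ Ioi 0 from h), ProbabilityTheory.gammaPDF_of_nonneg h.le]
    ring_nf

lemma isProbabilityMeasure_gammaM {a : ℝ} (ha : 0 < a) : IsProbabilityMeasure (gammaM a) :=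
  gammaM_eq_gammaMeasure a ▸ ProbabilityTheory.isProbabilityMeasure_gammaMeasure ha one_pos

section ProductMeasures

variable {X Y Z U V W : Type*} [MeasurableSpace X] [MeasurableSpace Y] [MeasurableSpace Z]
  [MeasurableSpace U] [MeasurableSpace V] [MeasurableSpace W]

lemma map_withDensity_comp {f : X → Y} (hf : Measurable f) (μ : Measure X) {g : Y → ℝ≥0∞}
    (hg : Measurable g) : (μ.withDensity (g ∘ f)).map f = (μ.map f).withDensity g := by
  ext s hs
  rw [Measure.map_apply hf hs, withDensity_apply _ hs, withDensity_apply _ (hf hs),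
    setLIntegral_map hs hg hf, Function.comp_def]

@[fun_prop]
lemma Measurable.finCons {n : ℕ} {f : Z → X} {g : Z → Fin n → X}
    (hf : Measurable f) (hg : Measurable g) :
    Measurable fun z => (Fin.cons (f z) (g z) : Fin (n + 1) → X) := by
  refine measurable_pi_lambda _ fun i => ?_
  cases i using Fin.cases with
  | zero => simpa using hf
  | succ j => simp only [Fin.cons_succ]; fun_prop

lemma map_finCons_prod_pi {n : ℕ} (μ : Fin (n + 1) → Measure X) [∀ i, SigmaFinite (μ i)] :
    ((μ 0).prod (Measure.pi fun j : Fin n => μ j.succ)).map (fun q => Fin.cons q.1 q.2)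
      = Measure.pi μ := by
  convert ((measurePreserving_piFinSuccAbove μ 0).symm).map_eq using 2
  · ext q : 1
    simp [MeasurableEquiv.piFinSuccAbove_symm_apply]
    rfl
  · simp

lemma pi_withDensity {n : ℕ} (μ : Fin n → Measure X) [∀ i, SigmaFinite (μ i)]
    (f : Fin n → X → ℝ≥0∞) (hf : ∀ i, Measurable (f i)) (hf_ne_top : ∀ i x, f i x ≠ ∞) :
    Measure.pi (fun i => (μ i).withDensity (f i))
      = (Measure.pi μ).withDensity fun x => ∏ i, f i (x i) := by
  induction n with
  | zero => simp [Measure.pi_of_empty (fun i => (μ i).withDensity (f i)), Measure.pi_of_empty μ]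
  | succ n ih =>
    have (i : Fin (n + 1)) := SigmaFinite.withDensity_of_ne_top' (μ := μ i) (hf_ne_top i)
    rw [← map_finCons_prod_pi, ← map_finCons_prod_pi μ,
      ih _ _ (fun j => hf j.succ) fun j => hf_ne_top j.succ, prod_withDensity (hf 0) (by fun_prop),
      ← map_withDensity_comp (by fun_prop) _ (by fun_prop)]
    simp only [Function.comp_def, Fin.prod_univ_succ, Fin.cons_zero, Fin.cons_succ]

lemma map_prod_chain {μ : Measure X} {ν : Measure Y} {ρ : Measure Z} {μ' : Measure U}
    {ν' : Measure V} {τ : Measure W} [SFinite μ] [SFinite ν] [SFinite ρ] [SFinite μ'] [SFinite ν']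
    {φ : X × Y → U × V} {ψ : V × Z → W} (hφ : Measurable φ) (hψ : Measurable ψ)
    (hμν : (μ.prod ν).map φ = μ'.prod ν') (hν'ρ : (ν'.prod ρ).map ψ = τ) :
    (μ.prod (ν.prod ρ)).map (fun q => ((φ (q.1, q.2.1)).1, ψ ((φ (q.1, q.2.1)).2, q.2.2)))
      = μ'.prod τ := by
  have hassoc : (fun q : X × Y × Z => ((φ (q.1, q.2.1)).1, ψ ((φ (q.1, q.2.1)).2, q.2.2)))
      = Prod.map id ψ ∘ MeasurableEquiv.prodAssoc ∘ Prod.map φ id ∘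
          MeasurableEquiv.prodAssoc.symm := rfl
  rw [hassoc, ← Measure.map_map (by fun_prop) (by fun_prop),
    ← Measure.map_map (by fun_prop) (by fun_prop), ← Measure.map_map (by fun_prop) (by fun_prop),
    (measurePreserving_prodAssoc μ ν ρ).symm.map_eq, ← Measure.map_prod_map _ _ hφ measurable_id,
    Measure.map_id, hμν, (measurePreserving_prodAssoc μ' ν' ρ).map_eq,
    ← Measure.map_prod_map _ _ measurable_id hψ, Measure.map_id, hν'ρ]

end ProductMeasures

lemma Real.lintegral_eq_abs_mul_lintegral_comp_mul_left (f : ℝ → ℝ≥0∞) {c : ℝ} (hc : c ≠ 0) :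
    ∫⁻ x, f x = ENNReal.ofReal |c| * ∫⁻ x, f (c * x) := by
  have h := lintegral_map_equiv f (MeasurableEquiv.mulLeft₀ c hc) (μ := volume)
  simp only [MeasurableEquiv.coe_mulLeft₀] at h
  rw [← h, Real.map_volume_mul_left hc, lintegral_smul_measure, smul_eq_mul, ← mul_assoc,
    ← ENNReal.ofReal_mul (abs_nonneg c), ← abs_mul, mul_inv_cancel₀ hc, abs_one, ENNReal.ofReal_one,
    one_mul]

lemma Real.image_rpow_Ioo_zero_one {α : ℝ} (hα : 0 < α) : (· ^ α) '' Ioo (0 : ℝ) 1 = Ioo 0 1 := by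
  refine Subset.antisymm ?_ fun u hu => ⟨u ^ α⁻¹, ?_, Real.rpow_inv_rpow hu.1.le hα.ne'⟩
  · rintro _ ⟨r, hr, rfl⟩
    exact ⟨Real.rpow_pos_of_pos hr.1 α, Real.rpow_lt_one hr.1.le hr.2 hα⟩
  · exact ⟨Real.rpow_pos_of_pos hu.1 _, Real.rpow_lt_one hu.1.le hu.2 (inv_pos.2 hα)⟩

lemma abs_mul_gammaDensity_mul_expDensity {a : ℝ} (ha : 0 < a) (s u : ℝ) :
    ENNReal.ofReal |s| * (gammaDensity a (s * u) * expDensity (s - s * u))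
      = betaDensity a u * gammaDensity (a + 1) s := by
  by_cases h : 0 < s ∧ u ∈ Ioo 0 1
  · obtain ⟨hs, hu0, hu1⟩ := h
    have hsu : 0 < s * u := mul_pos hs hu0
    have hsu' : 0 < s - s * u := by nlinarith
    simp only [gammaDensity, expDensity, betaDensity,
      indicator_of_mem (show s * u ∈ Ioi 0 from hsu), indicator_of_mem (show s ∈ Ioi 0 from hs),
      indicator_of_mem (show s - s * u ∈ Ioi 0 from hsu'),
      indicator_of_mem (show u ∈ Ioo 0 1 from ⟨hu0, hu1⟩)]
    have hΓ := Real.Gamma_pos_of_pos ha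
    rw [← ENNReal.ofReal_mul (by positivity), ← ENNReal.ofReal_mul (abs_nonneg s),
      ← ENNReal.ofReal_mul (by positivity)]
    congr 1
    rw [abs_of_pos hs, Real.mul_rpow hs.le hu0.le, Real.Gamma_add_one ha.ne', add_sub_cancel_right,
      Real.rpow_sub_one hs.ne', Real.rpow_sub_one hu0.ne', mul_div_assoc,
      show Real.exp (-s) = Real.exp (-(s * u)) * Real.exp (-(s - s * u)) by
        rw [← Real.exp_add]; ring_nf]
    field_simp
  · have hlhs : gammaDensity a (s * u) * expDensity (s - s * u) = 0 := by
      by_contra hne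
      obtain ⟨hsu, hsu'⟩ := mul_ne_zero_iff.mp hne
      replace hsu : 0 < s * u := mem_of_indicator_ne_zero hsu
      replace hsu' : 0 < s - s * u := mem_of_indicator_ne_zero hsu'
      have hs : 0 < s := by linarith
      exact h ⟨hs, pos_of_mul_pos_right hsu hs.le, by nlinarith⟩
    have hrhs : betaDensity a u * gammaDensity (a + 1) s = 0 := by
      rcases not_and_or.mp h with hs | hu
      · rw [gammaDensity, indicator_of_notMem (show s ∉ Ioi 0 from hs), mul_zero]
      · rw [betaDensity, indicator_of_notMem hu, zero_mul]
    rw [hlhs, hrhs, mul_zero]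

theorem map_gammaM_prod_expM {a : ℝ} (ha : 0 < a) :
    ((gammaM a).prod expM).map (fun p => (p.1 / (p.1 + p.2), p.1 + p.2))
      = (betaM a).prod (gammaM (a + 1)) := by
  refine Measure.ext_of_lintegral _ fun F hF => ?_
  rw [lintegral_map hF (by fun_prop)]
  calc ∫⁻ p, F (p.1 / (p.1 + p.2), p.1 + p.2) ∂(gammaM a).prod expM
      = ∫⁻ p, gammaDensity a p.1 * expDensity p.2 * F (p.1 / (p.1 + p.2), p.1 + p.2)
          ∂volume.prod volume := by
        rw [gammaM_eq, expM_eq, prod_withDensity (by fun_prop) (by fun_prop),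
          lintegral_withDensity_eq_lintegral_mul _ (by fun_prop) (by fun_prop)]
        rfl
    _ = ∫⁻ q, gammaDensity a q.1 * expDensity (q.2 - q.1) * F (q.1 / q.2, q.2)
          ∂volume.prod volume := by
        refine Eq.trans ?_ ((measurePreserving_prod_add volume volume).lintegral_comp (by fun_prop))
        simp only [add_sub_cancel_left]
    _ = ∫⁻ s, ∫⁻ x, gammaDensity a x * expDensity (s - x) * F (x / s, s) :=
        lintegral_prod_symm _ (by fun_prop)
    _ = ∫⁻ s, ∫⁻ u, betaDensity a u * gammaDensity (a + 1) s * F (u, s) := by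
        refine lintegral_congr_ae ?_
        filter_upwards [volume.ae_ne 0] with s hs
        rw [Real.lintegral_eq_abs_mul_lintegral_comp_mul_left _ hs,
          ← lintegral_const_mul' _ _ ENNReal.ofReal_ne_top]
        refine lintegral_congr fun u => ?_
        rw [mul_div_cancel_left₀ u hs, ← mul_assoc,
          abs_mul_gammaDensity_mul_expDensity ha]
    _ = ∫⁻ p, F p ∂(betaM a).prod (gammaM (a + 1)) := by
        rw [betaM, gammaM_eq, prod_withDensity (by fun_prop) (by fun_prop),
          lintegral_withDensity_eq_lintegral_mul _ (by fun_prop) hF,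
          lintegral_prod_symm _ (by fun_prop)]
        rfl

theorem map_rpow_betaM {α : ℝ} (hα : 0 < α) (b : ℝ) :
    (betaM b).map (· ^ (1 / α)) = betaM (b * α) := by
  refine Measure.ext_of_lintegral _ fun F hF => ?_
  rw [lintegral_map hF (by fun_prop), betaM, betaM,
    lintegral_withDensity_eq_lintegral_mul _ (by fun_prop) (by fun_prop),
    lintegral_withDensity_eq_lintegral_mul _ (by fun_prop) hF]
  simp only [Pi.mul_apply, betaDensity, ← indicator_mul_left _ _ fun r => F (r ^ (1 / α)),
    ← indicator_mul_left _ _ F]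
  rw [lintegral_indicator measurableSet_Ioo, lintegral_indicator measurableSet_Ioo,
    ← Real.image_rpow_Ioo_zero_one hα, lintegral_image_eq_lintegral_abs_deriv_mul measurableSet_Ioo
      (fun r hr => (Real.hasDerivAt_rpow_const (Or.inl hr.1.ne')).hasDerivWithinAt)
      ((Real.rpow_left_injOn hα.ne').mono fun r hr => hr.1.le), Real.image_rpow_Ioo_zero_one hα]
  refine setLIntegral_congr_fun measurableSet_Ioo fun r hr => ?_
  have hr0 : 0 < r := hr.1
  have hpow : r ^ (α - 1) * r ^ (α * (b - 1)) = r ^ (b * α - 1) := by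
    rw [← Real.rpow_add hr0]; ring_nf
  rw [one_div, Real.rpow_rpow_inv hr0.le hα.ne', ← mul_assoc, ← ENNReal.ofReal_mul (abs_nonneg _),
    abs_of_pos (by positivity), ← Real.rpow_mul hr0.le]
  congr 2
  linear_combination b * α * hpow

theorem map_gammaM_prod_expM_rpow {α a : ℝ} (hα : 0 < α) (ha : 0 < a) :
    ((gammaM a).prod expM).map (fun p => ((p.1 / (p.1 + p.2)) ^ (1 / α), p.1 + p.2))
      = (betaM (a * α)).prod (gammaM (a + 1)) := by
  rw [← map_rpow_betaM hα, ← Measure.map_id (μ := gammaM (a + 1)),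
    Measure.map_prod_map _ _ (by fun_prop) measurable_id, ← map_gammaM_prod_expM ha,
    Measure.map_map (by fun_prop) (by fun_prop)]
  rfl

lemma sum_filter_finCons {n : ℕ} (p : Fin (n + 1) → Prop) [DecidablePred p] (h0 : p 0) (x : ℝ)
    (v : Fin n → ℝ) :
    ∑ i with p i, (Fin.cons x v : Fin (n + 1) → ℝ) i = x + ∑ i with p i.succ, v i := by
  rw [Finset.sum_filter, Finset.sum_filter, Fin.sum_univ_succ]
  simp [h0]

noncomputable def partialSumRatios (α : ℝ) (n : ℕ) (p : ℝ × (Fin n → ℝ)) : Fin n → ℝ :=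
  fun k => ((p.1 + ∑ i ∈ Finset.Iio k, p.2 i) / (p.1 + ∑ i ∈ Finset.Iic k, p.2 i)) ^ (1 / α)

@[fun_prop]
lemma measurable_partialSumRatios (α : ℝ) (n : ℕ) : Measurable (partialSumRatios α n) := by
  unfold partialSumRatios; fun_prop

lemma partialSumRatios_finCons (α g x : ℝ) {n : ℕ} (v : Fin n → ℝ) :
    partialSumRatios α (n + 1) (g, Fin.cons x v)
      = Fin.cons ((g / (g + x)) ^ (1 / α)) (partialSumRatios α n (g + x, v)) := by
  ext k
  cases k using Fin.cases with
  | zero =>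
    simp [partialSumRatios, ← Finset.filter_gt_eq_Iio, ← Finset.filter_ge_eq_Iic,
      Finset.sum_filter]
  | succ j =>
    simp only [partialSumRatios, Fin.cons_succ, ← Finset.filter_gt_eq_Iio,
      ← Finset.filter_ge_eq_Iic, sum_filter_finCons (· < j.succ) (Fin.succ_pos j),
      sum_filter_finCons (· ≤ j.succ) (Fin.zero_le _), Fin.succ_lt_succ_iff,
      Fin.succ_le_succ_iff, add_assoc]

theorem map_partialSumRatios {α : ℝ} (hα : 0 < α) (n : ℕ) {a : ℝ} (ha : 0 < a) :
    ((gammaM a).prod (Measure.pi fun _ : Fin n => expM)).map (partialSumRatios α n)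
      = Measure.pi fun k : Fin n => betaM ((a + k) * α) := by
  induction n generalizing a with
  | zero =>
    have := isProbabilityMeasure_gammaM ha
    rw [Measure.pi_of_empty, Subsingleton.elim (partialSumRatios α 0) fun _ => isEmptyElim,
      Measure.map_const, measure_univ, one_smul, Measure.pi_of_empty]
  | succ n ih =>
    calc ((gammaM a).prod (Measure.pi fun _ => expM)).map (partialSumRatios α (n + 1))
        = ((gammaM a).prod (expM.prod (Measure.pi fun _ : Fin n => expM))).map
            (partialSumRatios α (n + 1) ∘
              Prod.map id fun q => (Fin.cons q.1 q.2 : Fin (n + 1) → ℝ)) := by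
          rw [← map_finCons_prod_pi fun _ => expM, ← Measure.map_map (by fun_prop) (by fun_prop),
            ← Measure.map_prod_map _ _ measurable_id (by fun_prop), Measure.map_id]
      _ = ((gammaM a).prod (expM.prod (Measure.pi fun _ : Fin n => expM))).map
            ((fun q => (Fin.cons q.1 q.2 : Fin (n + 1) → ℝ)) ∘
              fun q => ((q.1 / (q.1 + q.2.1)) ^ (1 / α), partialSumRatios α n (q.1 + q.2.1, q.2.2)))
            := by
          congr 1
          ext1 q
          exact partialSumRatios_finCons α q.1 q.2.1 q.2.2
      _ = ((betaM (a * α)).prod (Measure.pi fun k : Fin n => betaM ((a + 1 + k) * α))).map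
            fun q => Fin.cons q.1 q.2 := by
          rw [← Measure.map_map (by fun_prop) (by fun_prop)]
          congr 1
          exact map_prod_chain (by fun_prop) (by fun_prop) (map_gammaM_prod_expM_rpow hα ha)
            (ih (by linarith))
      _ = Measure.pi fun k : Fin (n + 1) => betaM ((a + k) * α) := by
          convert map_finCons_prod_pi fun k : Fin (n + 1) => betaM ((a + k) * α) using 4
          · simp
          · ext1 j
            rw [Fin.val_succ, Nat.cast_succ, add_comm (j : ℝ) 1, add_assoc]

lemma prod_betaDensity {ι : Type*} [Fintype ι] (b : ι → ℝ) (hb : ∀ i, 0 ≤ b i) (r : ι → ℝ) :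
    ∏ i, betaDensity (b i) (r i)
      = (univ.pi fun _ => Ioo (0 : ℝ) 1).indicator
          (fun r => ENNReal.ofReal (∏ i, b i * r i ^ (b i - 1))) r := by
  by_cases hr : r ∈ univ.pi fun _ => Ioo (0 : ℝ) 1
  · have hr0 (i : ι) : 0 < r i := (hr i (mem_univ i)).1
    rw [indicator_of_mem hr,
      ENNReal.ofReal_prod_of_nonneg fun i _ => mul_nonneg (hb i) (Real.rpow_nonneg (hr0 i).le _)]
    exact Finset.prod_congr rfl fun i _ => indicator_of_mem (hr i (mem_univ i)) _
  · obtain ⟨i, hi⟩ : ∃ i, r i ∉ Ioo (0 : ℝ) 1 := by simpa [Set.mem_pi] using hr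
    rw [indicator_of_notMem hr]
    exact Finset.prod_eq_zero (Finset.mem_univ i) (indicator_of_notMem hi _)

theorem stmt8_general (α : ℝ) (hα : α ∈ Set.Ioo (0 : ℝ) 1) (θ : ℝ) (hθ : 0 < θ)
    (n : ℕ) :
    Measure.map
        (fun p : ℝ × (Fin n → ℝ) => fun k : Fin n =>
          ((p.1 + ∑ i ∈ Finset.Iio k, p.2 i) / (p.1 + ∑ i ∈ Finset.Iic k, p.2 i)) ^ (1 / α))
        ((gammaM (θ / α)).prod (Measure.pi fun _ : Fin n => expM))
      = (volume : Measure (Fin n → ℝ)).withDensity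
          ((Set.univ.pi fun _ : Fin n => Set.Ioo (0 : ℝ) 1).indicator fun r =>
            ENNReal.ofReal
              (∏ k : Fin n, (θ + ((k : ℕ) : ℝ) * α) * r k ^ (θ + ((k : ℕ) : ℝ) * α - 1))) := by
  have hα0 : 0 < α := hα.1
  have hparam (k : Fin n) : (θ / α + k) * α = θ + k * α := by field_simp
  change ((gammaM (θ / α)).prod _).map (partialSumRatios α n) = _
  rw [map_partialSumRatios hα0 n (div_pos hθ hα0)]
  simp only [hparam, betaM]
  rw [pi_withDensity _ _ (fun k => measurable_betaDensity _) fun k => indicator_ofReal_ne_top _ _,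
    ← volume_pi]
  congr 1
  ext1 r
  exact prod_betaDensity _ (fun k => by positivity) r

/-- **Corollary (independent Beta R's).** For `G ~ Gamma(θ/α)` independent of i.i.d.
Exp(1) variables `E₁,…,E_n`, with `G̃_k = E₁ + ⋯ + E_k` and
`R_k = ((G + G̃_{k-1})/(G + G̃_k))^{1/α}`, the vector `(R₁,…,R_n)` has joint Lebesgue
density `∏_k (θ + (k-1)α) r_k^{θ+(k-1)α-1}` on `(0,1)^n`, i.e. the `R_k` are independent
`Beta(θ+(k-1)α, 1)` variables (indices 0-based here). -/
theorem stmt8 (α : ℝ) (hα : α ∈ Set.Ioo (0 : ℝ) 1) (θ : ℝ) (hθ : 0 < θ)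
    (n : ℕ) (hn : 1 ≤ n) :
    Measure.map
        (fun p : ℝ × (Fin n → ℝ) => fun k : Fin n =>
          ((p.1 + ∑ i ∈ Finset.Iio k, p.2 i) / (p.1 + ∑ i ∈ Finset.Iic k, p.2 i)) ^ (1 / α))
        ((gammaM (θ / α)).prod (Measure.pi fun _ : Fin n => expM))
      = (volume : Measure (Fin n → ℝ)).withDensity
          ((Set.univ.pi fun _ : Fin n => Set.Ioo (0 : ℝ) 1).indicator fun r =>
            ENNReal.ofReal
              (∏ k : Fin n, (θ + ((k : ℕ) : ℝ) * α) * r k ^ (θ + ((k : ℕ) : ℝ) * α - 1))) :=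
  stmt8_general α hα θ hθ n
end

section
/- Fix α ∈ (0,1). Let f_α : (0,∞) → [0,∞) be a measurable function with ∫₀^∞ f_α(t) dt = 1 and ∫₀^∞ e^{-λ t} f_α(t) dt = e^{-λ^α} for all λ ≥ 0. Then for every integer n ≥ 1, every λ > 0 and all 0 < w_l < 1 (l = 1,…,n): ∫₀^∞ s^{-nα} e^{-λ s/(∏_{l=1}^n w_l)} f_α(s) ds = (λ^{nα} / (Γ(α)^n ∏_{l=1}^n w_l^{lα-1})) ∫₀^{w₁} ⋯ ∫₀^{w_n} ∏_{l=1}^n (w_l - r_l)^{α-1} r_l^{-(n-l+1)α-1} e^{-λ^α/(∏_{l=1}^n r_l)^α} dr_n ⋯ dr₁. -/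
/-!
Write `s ^ (-α) = Γ(α)⁻¹ ∫₀^∞ y ^ (α - 1) e^{-s y} dy`. Inserting this into
`∫ s ^ (-α) e^{-c s / w} h(s) ds`, exchanging the integrals and substituting `y = c / r - c / w`
expresses the integral as a mixture over `r ∈ (0, w)` of the Laplace transform of `h` at `c / r`.
Applying this once per factor `s ^ (-α)` of `s ^ (-n α)` (induction on `n`, peeling off the
first coordinate) gives an `n`-fold mixture of the Laplace transform of `f`, which is
`e^{-μ ^ α}` by hypothesis. Everything is done with lower Lebesgue integrals, where Tonelli
needs no integrability; as both sides are nonnegative, the Bochner integrals are recovered at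
the end.
-/

open MeasureTheory Set
open scoped ENNReal

noncomputable def laplaceIoi (h : ℝ → ℝ≥0∞) (μ : ℝ) : ℝ≥0∞ :=
  ∫⁻ s in Ioi 0, ENNReal.ofReal (Real.exp (-(μ * s))) * h s

@[fun_prop]
theorem measurable_laplaceIoi {h : ℝ → ℝ≥0∞} (hh : Measurable h) :
    Measurable (laplaceIoi h) :=
  Measurable.lintegral_prod_right (by fun_prop)

theorem ofReal_rpow_neg_eq_lintegral_Ioi {α s : ℝ} (hα : 0 < α) (hs : 0 < s) :
    ENNReal.ofReal (s ^ (-α)) = ENNReal.ofReal (Real.Gamma α)⁻¹ *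
      ∫⁻ y in Ioi 0, ENNReal.ofReal (y ^ (α - 1) * Real.exp (-(s * y))) := by
  have hint : IntegrableOn (fun y : ℝ => y ^ (α - 1) * Real.exp (-(s * y))) (Ioi 0) := by
    simpa [Real.rpow_one, neg_mul] using
      integrableOn_rpow_mul_exp_neg_mul_rpow (p := 1) (by linarith) one_pos hs
  rw [← ofReal_integral_eq_lintegral_ofReal hint, Real.integral_rpow_mul_exp_neg_mul_Ioi hα hs,
    ← ENNReal.ofReal_mul (by have := Real.Gamma_pos_of_pos hα; positivity)]
  · rw [one_div, Real.inv_rpow hs.le, Real.rpow_neg hs.le,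
      mul_comm (s ^ α)⁻¹, inv_mul_cancel_left₀ (Real.Gamma_pos_of_pos hα).ne']
  · filter_upwards [ae_restrict_mem measurableSet_Ioi] with y hy
    have : (0 : ℝ) < y := hy
    positivity

theorem lintegral_Ioi_eq_lintegral_Ioo_inv_sub {c w : ℝ} (hc : 0 < c) (hw : 0 < w)
    (G : ℝ → ℝ≥0∞) :
    ∫⁻ y in Ioi 0, G y = ∫⁻ r in Ioo 0 w, ENNReal.ofReal (c / r ^ 2) * G (c / r - c / w) := by
  have himage : (fun r => c / r - c / w) '' Ioo 0 w = Ioi 0 := by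
    ext y
    constructor
    · rintro ⟨r, ⟨hr0, hrw⟩, rfl⟩
      simpa using div_lt_div_of_pos_left hc hr0 hrw
    · intro hy
      have hy : 0 < y := hy
      refine ⟨c / (y + c / w), ⟨by positivity, ?_⟩, by field_simp; ring⟩
      rw [div_lt_iff₀ (by positivity)]
      field_simp
      nlinarith
  have hderiv : ∀ r ∈ Ioo 0 w,
      HasDerivWithinAt (fun r => c / r - c / w) (-(c / r ^ 2)) (Ioo 0 w) r := by
    intro r hr
    have := ((hasDerivAt_inv hr.1.ne').const_mul c).sub_const (c / w)
    rw [show -(c / r ^ 2) = c * -(r ^ 2)⁻¹ by ring]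
    simpa only [div_eq_mul_inv] using this.hasDerivWithinAt
  have hinj : InjOn (fun r => c / r - c / w) (Ioo 0 w) := by
    intro a ha b hb hab
    rw [sub_left_inj, div_eq_div_iff ha.1.ne' hb.1.ne'] at hab
    exact (mul_left_cancel₀ hc.ne' hab).symm
  rw [← himage, lintegral_image_eq_lintegral_abs_deriv_mul measurableSet_Ioo hderiv hinj]
  refine setLIntegral_congr_fun measurableSet_Ioo fun r hr => ?_
  rw [abs_neg, abs_of_pos (by have := hr.1; positivity)]

theorem lintegral_rpow_neg_mul_laplaceIoi {α c w : ℝ} (hα : 0 < α) (hc : 0 < c) (hw : 0 < w)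
    {h : ℝ → ℝ≥0∞} (hh : Measurable h) :
    ∫⁻ s in Ioi 0, ENNReal.ofReal (s ^ (-α) * Real.exp (-(c / w * s))) * h s =
      ∫⁻ r in Ioo 0 w, ENNReal.ofReal (c ^ α / (Real.Gamma α * w ^ (α - 1)) *
        ((w - r) ^ (α - 1) * r ^ (-α - 1))) * laplaceIoi h (c / r) := by
  have hΓ := Real.Gamma_pos_of_pos hα
  calc ∫⁻ s in Ioi 0, ENNReal.ofReal (s ^ (-α) * Real.exp (-(c / w * s))) * h s
      = ∫⁻ s in Ioi 0, ENNReal.ofReal (Real.Gamma α)⁻¹ * ∫⁻ y in Ioi 0,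
          ENNReal.ofReal (y ^ (α - 1)) *
            (ENNReal.ofReal (Real.exp (-((y + c / w) * s))) * h s) := by
        refine setLIntegral_congr_fun measurableSet_Ioi fun s (hs : 0 < s) => ?_
        rw [ENNReal.ofReal_mul (by positivity), ofReal_rpow_neg_eq_lintegral_Ioi hα hs, mul_assoc,
          mul_assoc, ← lintegral_mul_const _ (by fun_prop)]
        congr 1
        refine setLIntegral_congr_fun measurableSet_Ioi fun y (hy : 0 < y) => ?_
        rw [ENNReal.ofReal_mul (by positivity), add_mul, neg_add, Real.exp_add,
          ENNReal.ofReal_mul (by positivity), mul_comm s y]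
        ring
    _ = ENNReal.ofReal (Real.Gamma α)⁻¹ * ∫⁻ y in Ioi 0,
          ENNReal.ofReal (y ^ (α - 1)) * laplaceIoi h (y + c / w) := by
        rw [lintegral_const_mul _ (by fun_prop), lintegral_lintegral_swap (by fun_prop)]
        congr 1
        refine setLIntegral_congr_fun measurableSet_Ioi fun y _ => ?_
        rw [laplaceIoi, lintegral_const_mul' _ _ ENNReal.ofReal_ne_top]
    _ = ENNReal.ofReal (Real.Gamma α)⁻¹ * ∫⁻ r in Ioo 0 w, ENNReal.ofReal (c / r ^ 2) *
          (ENNReal.ofReal ((c / r - c / w) ^ (α - 1)) * laplaceIoi h (c / r)) := by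
        rw [lintegral_Ioi_eq_lintegral_Ioo_inv_sub hc hw]
        simp only [sub_add_cancel]
    _ = _ := by
        rw [← lintegral_const_mul' _ _ ENNReal.ofReal_ne_top]
        refine setLIntegral_congr_fun measurableSet_Ioo fun r ⟨hr, hrw⟩ => ?_
        have hwr : 0 < w - r := by linarith
        rw [← mul_assoc, ← mul_assoc, ← ENNReal.ofReal_mul (by positivity),
          ← ENNReal.ofReal_mul (by positivity),
          show c / r - c / w = c * (w - r) / (r * w) by field_simp,
          Real.div_rpow (by positivity) (by positivity), Real.mul_rpow hc.le hwr.le,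
          Real.mul_rpow hr.le hw.le, Real.rpow_sub_one hc.ne', Real.rpow_sub_one hr.ne',
          Real.rpow_sub_one hr.ne', Real.rpow_neg hr.le]
        congr 2
        field_simp

theorem setLIntegral_univ_pi_fin_succ {X : Type*} [MeasureSpace X]
    [SigmaFinite (volume : Measure X)] {n : ℕ}
    (S : Fin (n + 1) → Set X) {G : (Fin (n + 1) → X) → ℝ≥0∞} (hG : Measurable G) :
    ∫⁻ r in univ.pi S, G r =
      ∫⁻ a in S 0, ∫⁻ b in univ.pi (fun l => S l.succ), G (Fin.cons a b) := by
  have e := (measurePreserving_piFinSuccAbove (fun l => volume.restrict (S l)) 0).symm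
  simp only [volume_pi, Measure.restrict_pi_pi]
  rw [← e.lintegral_comp hG]
  refine (lintegral_prod _ (hG.comp e.measurable).aemeasurable).trans ?_
  simp [MeasurableEquiv.piFinSuccAbove_symm_apply, Fin.insertNthEquiv]

noncomputable def mixingConst (α lam : ℝ) {n : ℕ} (w : Fin n → ℝ) : ℝ :=
  lam ^ ((n : ℝ) * α) / (Real.Gamma α ^ n * ∏ l, w l ^ ((((l : ℕ) : ℝ) + 1) * α - 1))

noncomputable def mixingKernel (α : ℝ) {n : ℕ} (w r : Fin n → ℝ) : ℝ :=
  ∏ l, ((w l - r l) ^ (α - 1) * r l ^ (-(((n : ℝ) - ((l : ℕ) : ℝ)) * α) - 1))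

theorem mixingConst_nonneg {α lam : ℝ} (hα : 0 < α) (hlam : 0 ≤ lam) {n : ℕ} {w : Fin n → ℝ}
    (hw : ∀ l, 0 < w l) : 0 ≤ mixingConst α lam w := by
  have := Real.Gamma_pos_of_pos hα
  have : 0 < ∏ l, w l ^ ((((l : ℕ) : ℝ) + 1) * α - 1) :=
    Finset.prod_pos fun l _ => Real.rpow_pos_of_pos (hw l) _
  unfold mixingConst
  positivity

theorem mixingKernel_nonneg {α : ℝ} {n : ℕ} {w r : Fin n → ℝ}
    (hr : r ∈ univ.pi fun l => Ioo 0 (w l)) : 0 ≤ mixingKernel α w r :=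
  Finset.prod_nonneg fun l _ => by
    obtain ⟨hr0, hrw⟩ := hr l (mem_univ _)
    have : 0 < w l - r l := by linarith
    positivity

theorem mixingKernel_cons {α : ℝ} {n : ℕ} (w : Fin (n + 1) → ℝ) (a : ℝ) (b : Fin n → ℝ) :
    mixingKernel α w (Fin.cons a b) =
      (w 0 - a) ^ (α - 1) * a ^ (-(((n : ℝ) + 1) * α) - 1) *
        mixingKernel α (fun l : Fin n => w l.succ) b := by
  rw [mixingKernel, Fin.prod_univ_succ]
  congr 1
  · norm_num
  · refine Finset.prod_congr rfl fun l _ => ?_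
    simp only [Fin.cons_succ, Fin.val_succ]
    push_cast
    ring_nf

theorem prod_rpow_succ_mul_sub_one_fin_succ {α : ℝ} {n : ℕ} (w : Fin (n + 1) → ℝ)
    (hw : ∀ l, 0 < w l) :
    ∏ l : Fin (n + 1), w l ^ ((((l : ℕ) : ℝ) + 1) * α - 1) =
      w 0 ^ (α - 1) * ((∏ l : Fin n, w l.succ ^ ((((l : ℕ) : ℝ) + 1) * α - 1)) *
        (∏ l : Fin n, w l.succ) ^ α) := by
  rw [Fin.prod_univ_succ, ← Real.finsetProd_rpow _ _ (fun l _ => (hw l.succ).le),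
    ← Finset.prod_mul_distrib]
  congr 1
  · norm_num
  · refine Finset.prod_congr rfl fun l _ => ?_
    rw [← Real.rpow_add (hw l.succ), Fin.val_succ]
    push_cast
    ring_nf

theorem mixingConst_succ {α lam a : ℝ} (hα : 0 < α) (hlam : 0 < lam) (ha : 0 < a) {n : ℕ}
    (w : Fin (n + 1) → ℝ) (hw : ∀ l, 0 < w l) :
    (lam / ∏ l : Fin n, w l.succ) ^ α / (Real.Gamma α * w 0 ^ (α - 1)) * a ^ (-α - 1) *
        mixingConst α (lam / a) (fun l : Fin n => w l.succ) =
      mixingConst α lam w * a ^ (-(((n : ℝ) + 1) * α) - 1) := by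
  have hW : 0 < ∏ l : Fin n, w l.succ := Finset.prod_pos fun l _ => hw l.succ
  have hP : 0 < ∏ l : Fin n, w l.succ ^ ((((l : ℕ) : ℝ) + 1) * α - 1) :=
    Finset.prod_pos fun l _ => Real.rpow_pos_of_pos (hw l.succ) _
  have hw₀ := hw 0
  have hΓ := Real.Gamma_pos_of_pos hα
  rw [mixingConst, mixingConst, prod_rpow_succ_mul_sub_one_fin_succ w hw]
  generalize ∏ l : Fin n, w l.succ = W at hW ⊢
  generalize ∏ l : Fin n, w l.succ ^ ((((l : ℕ) : ℝ) + 1) * α - 1) = P at hP ⊢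
  refine Real.log_injOn_pos (Set.mem_Ioi.2 (by positivity)) (Set.mem_Ioi.2 (by positivity)) ?_
  simp (disch := positivity) only [Real.log_mul, Real.log_div, Real.log_rpow, Real.log_pow]
  push_cast
  ring

theorem mixingConst_mul_lintegral_fin_succ {α lam : ℝ} (hα : 0 < α) (hlam : 0 < lam)
    {h : ℝ → ℝ≥0∞} (hh : Measurable h) {n : ℕ} (w : Fin (n + 1) → ℝ) (hw : ∀ l, 0 < w l) :
    ENNReal.ofReal (mixingConst α lam w) * ∫⁻ r in univ.pi (fun l => Ioo 0 (w l)),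
        ENNReal.ofReal (mixingKernel α w r) * laplaceIoi h (lam / ∏ l, r l) =
      ∫⁻ a in Ioo 0 (w 0), ENNReal.ofReal ((lam / ∏ l : Fin n, w l.succ) ^ α /
          (Real.Gamma α * w 0 ^ (α - 1)) * ((w 0 - a) ^ (α - 1) * a ^ (-α - 1))) *
        (ENNReal.ofReal (mixingConst α (lam / a) fun l : Fin n => w l.succ) *
          ∫⁻ b in univ.pi (fun l : Fin n => Ioo 0 (w l.succ)),
            ENNReal.ofReal (mixingKernel α (fun l : Fin n => w l.succ) b) *
              laplaceIoi h (lam / a / ∏ l, b l)) := by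
  have hW : 0 < ∏ l : Fin n, w l.succ := Finset.prod_pos fun l _ => hw l.succ
  have hw₀ := hw 0
  rw [setLIntegral_univ_pi_fin_succ _ (by unfold mixingKernel; fun_prop),
    ← lintegral_const_mul' _ _ ENNReal.ofReal_ne_top]
  refine setLIntegral_congr_fun measurableSet_Ioo fun a ⟨ha, haw⟩ => ?_
  simp only [← lintegral_const_mul' _ _ ENNReal.ofReal_ne_top]
  refine setLIntegral_congr_fun (MeasurableSet.univ_pi fun _ => measurableSet_Ioo) fun b _ => ?_
  have hwa : 0 < w 0 - a := by linarith
  have hprod : lam / ∏ l, (Fin.cons a b : Fin (n + 1) → ℝ) l = lam / a / ∏ l, b l := by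
    rw [Fin.prod_univ_succ, div_div]
    simp only [Fin.cons_zero, Fin.cons_succ]
  have hconst : (lam / ∏ l : Fin n, w l.succ) ^ α / (Real.Gamma α * w 0 ^ (α - 1)) *
      ((w 0 - a) ^ (α - 1) * a ^ (-α - 1)) * mixingConst α (lam / a) (fun l : Fin n => w l.succ) =
      mixingConst α lam w * ((w 0 - a) ^ (α - 1) * a ^ (-(((n : ℝ) + 1) * α) - 1)) := by
    linear_combination (w 0 - a) ^ (α - 1) * mixingConst_succ hα hlam ha w hw
  have hk₀ : 0 ≤ (w 0 - a) ^ (α - 1) * a ^ (-(((n : ℝ) + 1) * α) - 1) := by positivity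
  rw [hprod, mixingKernel_cons, ENNReal.ofReal_mul hk₀, ← mul_assoc, ← mul_assoc,
    ← mul_assoc, ← ENNReal.ofReal_mul (mixingConst_nonneg hα hlam.le hw), ← hconst,
    ENNReal.ofReal_mul (by positivity)]
  ring

theorem lintegral_rpow_neg_mul_exp_div_prod {α : ℝ} (hα : 0 < α) {h : ℝ → ℝ≥0∞}
    (hh : Measurable h) (n : ℕ) {lam : ℝ} (hlam : 0 < lam) (w : Fin n → ℝ) (hw : ∀ l, 0 < w l) :
    ∫⁻ s in Ioi 0, ENNReal.ofReal (s ^ (-(n : ℝ) * α) * Real.exp (-(lam * s) / ∏ l, w l)) * h s =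
      ENNReal.ofReal (mixingConst α lam w) * ∫⁻ r in univ.pi (fun l => Ioo 0 (w l)),
        ENNReal.ofReal (mixingKernel α w r) * laplaceIoi h (lam / ∏ l, r l) := by
  induction n generalizing lam with
  | zero => simp [mixingConst, mixingKernel, laplaceIoi, volume_pi]
  | succ n ih =>
  have hW : 0 < ∏ l : Fin n, w l.succ := Finset.prod_pos fun l _ => hw l.succ
  have hpeel : ∫⁻ s in Ioi 0, ENNReal.ofReal (s ^ (-((n + 1 : ℕ) : ℝ) * α) *
        Real.exp (-(lam * s) / ∏ l, w l)) * h s =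
      ∫⁻ s in Ioi 0, ENNReal.ofReal (s ^ (-α) *
        Real.exp (-(lam / (∏ l : Fin n, w l.succ) / w 0 * s))) *
          (ENNReal.ofReal (s ^ (-(n : ℝ) * α)) * h s) := by
    refine setLIntegral_congr_fun measurableSet_Ioi fun s (hs : 0 < s) => ?_
    rw [← mul_assoc, ← ENNReal.ofReal_mul (by positivity), Fin.prod_univ_succ]
    congr 2
    rw [mul_right_comm, ← Real.rpow_add hs]
    push_cast
    ring_nf
  rw [hpeel, lintegral_rpow_neg_mul_laplaceIoi hα (by positivity) (hw 0) (by fun_prop),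
    mixingConst_mul_lintegral_fin_succ hα hlam hh w hw]
  refine setLIntegral_congr_fun measurableSet_Ioo fun a ⟨ha, _⟩ => ?_
  rw [← ih (by positivity) _ fun l => hw l.succ]
  congr 1
  refine setLIntegral_congr_fun measurableSet_Ioi fun s (hs : 0 < s) => ?_
  rw [← mul_assoc, ← ENNReal.ofReal_mul (by positivity)]
  congr 2
  field_simp

theorem laplaceIoi_ofReal_of_integral_ne_zero {f : ℝ → ℝ} (hfnn : ∀ t ∈ Ioi (0 : ℝ), 0 ≤ f t)
    {μ : ℝ} (hμ : ∫ t in Ioi (0 : ℝ), Real.exp (-μ * t) * f t ≠ 0) :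
    laplaceIoi (fun t => ENNReal.ofReal (f t)) μ =
      ENNReal.ofReal (∫ t in Ioi (0 : ℝ), Real.exp (-μ * t) * f t) := by
  rw [ofReal_integral_eq_lintegral_ofReal (Integrable.of_integral_ne_zero hμ)
    ((ae_restrict_iff' measurableSet_Ioi).2 (ae_of_all _ fun t ht => by
      have := hfnn t ht; positivity))]
  refine setLIntegral_congr_fun measurableSet_Ioi fun t _ => ?_
  rw [← ENNReal.ofReal_mul (Real.exp_nonneg _), neg_mul]

theorem integral_eq_mul_integral_of_lintegral_eq {X Y : Type*} [MeasurableSpace X]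
    [MeasurableSpace Y] {μ : Measure X} {ν : Measure Y} {f : X → ℝ} {g : Y → ℝ} {c : ℝ}
    (hf : 0 ≤ᵐ[μ] f) (hfm : AEStronglyMeasurable f μ) (hg : 0 ≤ᵐ[ν] g)
    (hgm : AEStronglyMeasurable g ν) (hc : 0 ≤ c)
    (h : ∫⁻ x, ENNReal.ofReal (f x) ∂μ = ENNReal.ofReal c * ∫⁻ y, ENNReal.ofReal (g y) ∂ν) :
    ∫ x, f x ∂μ = c * ∫ y, g y ∂ν := by
  rw [integral_eq_lintegral_of_nonneg_ae hf hfm, integral_eq_lintegral_of_nonneg_ae hg hgm, h,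
    ENNReal.toReal_mul, ENNReal.toReal_ofReal hc]

theorem stmt10_general (α : ℝ) (hα : α ∈ Set.Ioo (0 : ℝ) 1) (f : ℝ → ℝ) (hfmeas : Measurable f)
    (hfnn : ∀ t ∈ Set.Ioi (0 : ℝ), 0 ≤ f t)
    (hflap : ∀ c : ℝ, 0 ≤ c →
      ∫ t in Set.Ioi (0 : ℝ), Real.exp (-c * t) * f t = Real.exp (-(c ^ α)))
    (n : ℕ) (lam : ℝ) (hlam : 0 < lam)
    (w : Fin n → ℝ) (hw : ∀ l, w l ∈ Set.Ioo (0 : ℝ) 1) :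
    ∫ s in Set.Ioi (0 : ℝ), s ^ (-(n : ℝ) * α) * Real.exp (-(lam * s) / ∏ l, w l) * f s
      = (lam ^ ((n : ℝ) * α) /
            (Real.Gamma α ^ n * ∏ l, w l ^ ((((l : ℕ) : ℝ) + 1) * α - 1))) *
          ∫ r in Set.univ.pi (fun l : Fin n => Set.Ioo (0 : ℝ) (w l)),
            (∏ l, ((w l - r l) ^ (α - 1) * r l ^ (-(((n : ℝ) - ((l : ℕ) : ℝ)) * α) - 1))) *
              Real.exp (-(lam ^ α) / (∏ l, r l) ^ α) := by
  have hwpos : ∀ l, 0 < w l := fun l => (hw l).1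
  have hpi : MeasurableSet (univ.pi fun l => Ioo (0 : ℝ) (w l)) :=
    MeasurableSet.univ_pi fun _ => measurableSet_Ioo
  refine integral_eq_mul_integral_of_lintegral_eq
    ((ae_restrict_iff' measurableSet_Ioi).2 (ae_of_all _ fun s (hs : 0 < s) => ?_))
    (by fun_prop) ((ae_restrict_iff' hpi).2 (ae_of_all _ fun r hr => ?_)) (by fun_prop)
    (mixingConst_nonneg hα.1 hlam.le hwpos) ?_
  · have := hfnn s hs
    positivity
  · exact mul_nonneg (mixingKernel_nonneg hr) (Real.exp_nonneg _)
  have hsplit : ∫⁻ s in Ioi 0, ENNReal.ofReal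
        (s ^ (-(n : ℝ) * α) * Real.exp (-(lam * s) / ∏ l, w l) * f s) =
      ∫⁻ s in Ioi 0, ENNReal.ofReal (s ^ (-(n : ℝ) * α) * Real.exp (-(lam * s) / ∏ l, w l)) *
        ENNReal.ofReal (f s) :=
    setLIntegral_congr_fun measurableSet_Ioi fun s (hs : 0 < s) =>
      ENNReal.ofReal_mul (by positivity)
  rw [hsplit, lintegral_rpow_neg_mul_exp_div_prod hα.1 (by fun_prop) n hlam w hwpos]
  congr 1
  refine setLIntegral_congr_fun hpi fun r hr => ?_
  have hr0 : 0 < ∏ l, r l := Finset.prod_pos fun l _ => (hr l (mem_univ _)).1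
  have hμ : 0 ≤ lam / ∏ l, r l := by positivity
  rw [laplaceIoi_ofReal_of_integral_ne_zero hfnn (by rw [hflap _ hμ]; positivity), hflap _ hμ,
    ← ENNReal.ofReal_mul (mixingKernel_nonneg hr), Real.div_rpow hlam.le hr0.le, neg_div]
  rfl

/-- **Lemma 3 (analytic content; the case m = 0, normalized generalized gamma).**
For an `α`-stable density `f_α`, `n ≥ 1`, `λ > 0` and `0 < w_l < 1`:
`∫₀^∞ s^{-nα} e^{-λ s/∏ w_l} f_α(s) ds` equals
`(λ^{nα}/(Γ(α)^n ∏ w_l^{lα-1}))` times the `n`-fold integral over `∏_l (0, w_l)` of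
`∏_l (w_l - r_l)^{α-1} r_l^{-(n-l+1)α-1} e^{-λ^α/(∏ r_l)^α}` (indices 0-based here). -/
theorem stmt10 (α : ℝ) (hα : α ∈ Set.Ioo (0 : ℝ) 1) (f : ℝ → ℝ) (hfmeas : Measurable f)
    (hfnn : ∀ t ∈ Set.Ioi (0 : ℝ), 0 ≤ f t)
    (hfint : ∫ t in Set.Ioi (0 : ℝ), f t = 1)
    (hflap : ∀ c : ℝ, 0 ≤ c →
      ∫ t in Set.Ioi (0 : ℝ), Real.exp (-c * t) * f t = Real.exp (-(c ^ α)))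
    (n : ℕ) (hn : 1 ≤ n) (lam : ℝ) (hlam : 0 < lam)
    (w : Fin n → ℝ) (hw : ∀ l, w l ∈ Set.Ioo (0 : ℝ) 1) :
    ∫ s in Set.Ioi (0 : ℝ), s ^ (-(n : ℝ) * α) * Real.exp (-(lam * s) / ∏ l, w l) * f s
      = (lam ^ ((n : ℝ) * α) /
            (Real.Gamma α ^ n * ∏ l, w l ^ ((((l : ℕ) : ℝ) + 1) * α - 1))) *
          ∫ r in Set.univ.pi (fun l : Fin n => Set.Ioo (0 : ℝ) (w l)),
            (∏ l, ((w l - r l) ^ (α - 1) * r l ^ (-(((n : ℝ) - ((l : ℕ) : ℝ)) * α) - 1))) *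
              Real.exp (-(lam ^ α) / (∏ l, r l) ^ α) :=
  stmt10_general α hα f hfmeas hfnn hflap n lam hlam w hw
end

section
/- Fix α ∈ (0,1) and λ > 0. Let f_α : (0,∞) → [0,∞) be a measurable function with ∫₀^∞ f_α(t) dt = 1 and ∫₀^∞ e^{-μ t} f_α(t) dt = e^{-μ^α} for all μ ≥ 0. Let T be a random variable with density t ↦ e^{λ^α} e^{-λ t} f_α(t) on (0,∞) and let E be an independent Exp(1) random variable. Then for every y ≥ 0, P(E/T > y) = e^{-((λ+y)^α - λ^α)}; equivalently, E/T has the same distribution as (λ^α + E)^{1/α} - λ. -/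
open MeasureTheory Set

/-- The law of the exponentially tilted stable variable `S_{α,0}(λ)`, with density
`e^{λ^α} e^{-λ t} f_α(t)` on `(0,∞)`. -/
noncomputable def tiltedStable (α lam : ℝ) (f : ℝ → ℝ) : Measure ℝ :=
  volume.withDensity ((Set.Ioi (0 : ℝ)).indicator fun t =>
    ENNReal.ofReal (Real.exp (lam ^ α) * Real.exp (-lam * t) * f t))

/-!
Conditioning on `T`, `P(E/T > y) = E[e^{-yT}]` is the Laplace transform of the tilted law, i.e.
`e^{λ^α} ∫ e^{-(λ+y)t} f_α(t) dt = e^{-((λ+y)^α - λ^α)}`. The map `t ↦ (λ^α + t)^{1/α} - λ` is the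
increasing inverse of `y ↦ (λ+y)^α - λ^α` on `[0,∞)`, so `(λ^α + E)^{1/α} - λ` has the same tail,
and a probability law on `ℝ` is determined by its tail.
-/

lemma ext_of_Ioi_of_isProbabilityMeasure {α : Type*} [TopologicalSpace α] [MeasurableSpace α]
    [SecondCountableTopology α] [LinearOrder α] [OrderTopology α] [BorelSpace α]
    (μ ν : Measure α) [IsProbabilityMeasure μ] [IsProbabilityMeasure ν]
    (h : ∀ a, μ (Ioi a) = ν (Ioi a)) : μ = ν :=
  Measure.ext_of_Iic μ ν fun a => by
    rw [← compl_Ioi, prob_compl_eq_one_sub measurableSet_Ioi,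
      prob_compl_eq_one_sub measurableSet_Ioi, h]

lemma ae_mem_withDensity_indicator {α : Type*} [MeasurableSpace α] (μ : Measure α) {s : Set α}
    (hs : MeasurableSet s) (d : α → ENNReal) : ∀ᵐ x ∂μ.withDensity (s.indicator d), x ∈ s := by
  rw [withDensity_indicator hs]
  exact (withDensity_absolutelyContinuous _ _).ae_le (ae_restrict_mem hs)

lemma prod_setOf_lt_div_eq_lintegral (μ ν : Measure ℝ) [SFinite ν] (hμ : ∀ᵐ x ∂μ, 0 < x)
    (y : ℝ) : (μ.prod ν) {p | y < p.2 / p.1} = ∫⁻ x, ν (Ioi (y * x)) ∂μ := by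
  rw [Measure.prod_apply (measurableSet_lt measurable_const (by fun_prop))]
  exact lintegral_congr_ae (hμ.mono fun x hx => congrArg ν (ext fun e => lt_div_iff₀ hx))

lemma lintegral_Ioi_ofReal_exp_neg (a : ℝ) :
    ∫⁻ t in Ioi a, ENNReal.ofReal (Real.exp (-t)) = ENNReal.ofReal (Real.exp (-a)) := by
  rw [← ofReal_integral_eq_lintegral_ofReal, integral_exp_neg_Ioi]
  · exact (by simpa using exp_neg_integrableOn_Ioi a one_pos :
      IntegrableOn (fun t => Real.exp (-t)) (Ioi a))
  · exact Filter.Eventually.of_forall fun x => (Real.exp_pos _).le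

lemma expM_Ioi (a : ℝ) : expM (Ioi a) = ENNReal.ofReal (Real.exp (-max a 0)) := by
  rw [expM, withDensity_indicator measurableSet_Ioi, withDensity_apply _ measurableSet_Ioi,
    Measure.restrict_restrict measurableSet_Ioi, Ioi_inter_Ioi, lintegral_Ioi_ofReal_exp_neg]

lemma ae_pos_expM : ∀ᵐ t ∂expM, 0 < t :=
  ae_mem_withDensity_indicator _ measurableSet_Ioi _

instance : IsProbabilityMeasure expM := by
  constructor
  rw [expM, withDensity_indicator measurableSet_Ioi, withDensity_apply _ MeasurableSet.univ,
    Measure.restrict_univ, lintegral_Ioi_ofReal_exp_neg]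
  simp

section TiltedStable

variable {α lam : ℝ} {f : ℝ → ℝ}

lemma ae_pos_tiltedStable : ∀ᵐ t ∂tiltedStable α lam f, 0 < t :=
  ae_mem_withDensity_indicator _ measurableSet_Ioi _

/-- A non-integrable function has Bochner integral `0`, while the Laplace transform is positive. -/
lemma integrableOn_exp_neg_mul_mul_of_laplace
    (hflap : ∀ c : ℝ, 0 ≤ c →
      ∫ t in Ioi (0 : ℝ), Real.exp (-c * t) * f t = Real.exp (-(c ^ α)))
    {c : ℝ} (hc : 0 ≤ c) : IntegrableOn (fun t => Real.exp (-c * t) * f t) (Ioi 0) :=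
  Integrable.of_integral_ne_zero (by rw [hflap c hc]; positivity)

lemma lintegral_tiltedStable_exp_neg_mul (hlam : 0 ≤ lam)
    (hfnn : ∀ t ∈ Ioi (0 : ℝ), 0 ≤ f t)
    (hflap : ∀ c : ℝ, 0 ≤ c →
      ∫ t in Ioi (0 : ℝ), Real.exp (-c * t) * f t = Real.exp (-(c ^ α)))
    {c : ℝ} (hc : 0 ≤ c) :
    ∫⁻ t, ENNReal.ofReal (Real.exp (-(c * t))) ∂tiltedStable α lam f
      = ENNReal.ofReal (Real.exp (-((lam + c) ^ α - lam ^ α))) := by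
  have hnn : 0 ≤ᵐ[volume.restrict (Ioi (0 : ℝ))] fun t => Real.exp (-(lam + c) * t) * f t :=
    (ae_restrict_mem measurableSet_Ioi).mono fun t ht => mul_nonneg (Real.exp_pos _).le (hfnn t ht)
  have hdens : AEMeasurable (fun t => ENNReal.ofReal (Real.exp (lam ^ α) * Real.exp (-lam * t)
      * f t)) (volume.restrict (Ioi 0)) := by
    simp_rw [mul_assoc]
    exact ((integrableOn_exp_neg_mul_mul_of_laplace hflap hlam).aemeasurable.const_mul
      _).ennreal_ofReal
  rw [tiltedStable, withDensity_indicator measurableSet_Ioi,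
    lintegral_withDensity_eq_lintegral_mul₀ hdens (by fun_prop)]
  calc ∫⁻ t in Ioi 0, ENNReal.ofReal (Real.exp (lam ^ α) * Real.exp (-lam * t) * f t)
        * ENNReal.ofReal (Real.exp (-(c * t)))
      = ∫⁻ t in Ioi 0, ENNReal.ofReal (Real.exp (lam ^ α))
          * ENNReal.ofReal (Real.exp (-(lam + c) * t) * f t) := by
        refine setLIntegral_congr_fun measurableSet_Ioi fun t ht => ?_
        have := hfnn t ht
        rw [← ENNReal.ofReal_mul (Real.exp_pos _).le, ← ENNReal.ofReal_mul (by positivity)]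
        congr 1
        rw [show -(lam + c) * t = -lam * t + -(c * t) by ring, Real.exp_add]
        ring
    _ = ENNReal.ofReal (Real.exp (lam ^ α)) * ENNReal.ofReal (Real.exp (-((lam + c) ^ α))) := by
        rw [lintegral_const_mul' _ _ ENNReal.ofReal_ne_top, ← hflap _ (by positivity),
          ofReal_integral_eq_lintegral_ofReal
            (integrableOn_exp_neg_mul_mul_of_laplace hflap (by positivity)) hnn]
    _ = ENNReal.ofReal (Real.exp (-((lam + c) ^ α - lam ^ α))) := by
        rw [← ENNReal.ofReal_mul (Real.exp_pos _).le, ← Real.exp_add]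
        ring_nf

lemma isProbabilityMeasure_tiltedStable (hlam : 0 ≤ lam)
    (hfnn : ∀ t ∈ Ioi (0 : ℝ), 0 ≤ f t)
    (hflap : ∀ c : ℝ, 0 ≤ c →
      ∫ t in Ioi (0 : ℝ), Real.exp (-c * t) * f t = Real.exp (-(c ^ α))) :
    IsProbabilityMeasure (tiltedStable α lam f) := by
  constructor
  simpa using lintegral_tiltedStable_exp_neg_mul hlam hfnn hflap le_rfl

/-- With `max y 0` the formula also covers `y < 0`, where the probability is `1`. -/
lemma tiltedStable_prod_expM_setOf_lt_div (hlam : 0 ≤ lam)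
    (hfnn : ∀ t ∈ Ioi (0 : ℝ), 0 ≤ f t)
    (hflap : ∀ c : ℝ, 0 ≤ c →
      ∫ t in Ioi (0 : ℝ), Real.exp (-c * t) * f t = Real.exp (-(c ^ α))) (y : ℝ) :
    ((tiltedStable α lam f).prod expM) {p | y < p.2 / p.1}
      = ENNReal.ofReal (Real.exp (-((lam + max y 0) ^ α - lam ^ α))) := by
  rw [prod_setOf_lt_div_eq_lintegral _ _ ae_pos_tiltedStable,
    ← lintegral_tiltedStable_exp_neg_mul hlam hfnn hflap (le_max_right y 0)]
  refine lintegral_congr_ae (ae_pos_tiltedStable.mono fun x hx => ?_)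
  dsimp only
  rw [expM_Ioi, max_mul_of_nonneg _ _ hx.le, zero_mul]

end TiltedStable

section ExpTransform

variable {α lam : ℝ}

lemma lt_rpow_one_div_sub_iff (hα : 0 < α) (hlam : 0 ≤ lam) {t : ℝ} (ht : 0 < t) (y : ℝ) :
    y < (lam ^ α + t) ^ (1 / α) - lam ↔ (lam + max y 0) ^ α - lam ^ α < t := by
  have key : ∀ s, 0 ≤ s → (s < (lam ^ α + t) ^ (1 / α) - lam ↔ (lam + s) ^ α - lam ^ α < t) :=
    fun s hs => by
      rw [lt_sub_iff_add_lt', one_div, Real.lt_rpow_inv_iff_of_pos (by positivity)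
        (by positivity) hα, sub_lt_iff_lt_add']
  rcases le_total 0 y with hy | hy
  · rw [max_eq_left hy, key y hy]
  · rw [max_eq_right hy]
    refine iff_of_true ?_ (by simpa using ht)
    exact hy.trans_lt ((key 0 le_rfl).2 (by simpa using ht))

lemma map_expM_Ioi (hα : 0 < α) (hlam : 0 ≤ lam) (y : ℝ) :
    expM.map (fun t => (lam ^ α + t) ^ (1 / α) - lam) (Ioi y)
      = ENNReal.ofReal (Real.exp (-((lam + max y 0) ^ α - lam ^ α))) := by
  have hgap : 0 ≤ (lam + max y 0) ^ α - lam ^ α := sub_nonneg.2 <|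
    Real.rpow_le_rpow hlam (le_add_of_nonneg_right (le_max_right y 0)) hα.le
  have hpre : (fun t => (lam ^ α + t) ^ (1 / α) - lam) ⁻¹' Ioi y
      =ᵐ[expM] Ioi ((lam + max y 0) ^ α - lam ^ α) :=
    Filter.eventuallyEq_set.2 (ae_pos_expM.mono fun t ht => lt_rpow_one_div_sub_iff hα hlam ht y)
  rw [Measure.map_apply (by fun_prop) measurableSet_Ioi, measure_congr hpre, expM_Ioi,
    max_eq_left hgap]

end ExpTransform

theorem stmt12_general (α : ℝ) (hα : α ∈ Set.Ioo (0 : ℝ) 1) (lam : ℝ) (hlam : 0 < lam) (f : ℝ → ℝ)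
    (hfnn : ∀ t ∈ Set.Ioi (0 : ℝ), 0 ≤ f t)
    (hflap : ∀ c : ℝ, 0 ≤ c →
      ∫ t in Set.Ioi (0 : ℝ), Real.exp (-c * t) * f t = Real.exp (-(c ^ α))) :
    (∀ y : ℝ, 0 ≤ y →
        ((tiltedStable α lam f).prod expM) {p : ℝ × ℝ | y < p.2 / p.1}
          = ENNReal.ofReal (Real.exp (-((lam + y) ^ α - lam ^ α)))) ∧
      Measure.map (fun p : ℝ × ℝ => p.2 / p.1) ((tiltedStable α lam f).prod expM)
        = Measure.map (fun t => (lam ^ α + t) ^ (1 / α) - lam) expM := by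
  have tail := tiltedStable_prod_expM_setOf_lt_div hlam.le hfnn hflap
  refine ⟨fun y hy => by rw [tail, max_eq_left hy], ?_⟩
  have := isProbabilityMeasure_tiltedStable hlam.le hfnn hflap
  have := Measure.isProbabilityMeasure_map (μ := (tiltedStable α lam f).prod expM)
    (f := fun p : ℝ × ℝ => p.2 / p.1) (by fun_prop)
  have := Measure.isProbabilityMeasure_map (μ := expM)
    (f := fun t => (lam ^ α + t) ^ (1 / α) - lam) (by fun_prop)
  refine ext_of_Ioi_of_isProbabilityMeasure _ _ fun y => ?_
  rw [Measure.map_apply (by fun_prop) measurableSet_Ioi, map_expM_Ioi hα.1 hlam.le]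
  exact tail y

/-- **Proposition 3(i).** If `T` has the exponentially tilted stable density
`e^{λ^α} e^{-λ t} f_α(t)` and `E ~ Exp(1)` is independent, then for all `y ≥ 0`,
`P(E/T > y) = e^{-((λ+y)^α - λ^α)}`; equivalently,
`E/T =_d (λ^α + E)^{1/α} - λ`. -/
theorem stmt12 (α : ℝ) (hα : α ∈ Set.Ioo (0 : ℝ) 1) (lam : ℝ) (hlam : 0 < lam) (f : ℝ → ℝ) (hfmeas : Measurable f)
    (hfnn : ∀ t ∈ Set.Ioi (0 : ℝ), 0 ≤ f t)
    (hfint : ∫ t in Set.Ioi (0 : ℝ), f t = 1)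
    (hflap : ∀ c : ℝ, 0 ≤ c →
      ∫ t in Set.Ioi (0 : ℝ), Real.exp (-c * t) * f t = Real.exp (-(c ^ α))) :
    (∀ y : ℝ, 0 ≤ y →
        ((tiltedStable α lam f).prod expM) {p : ℝ × ℝ | y < p.2 / p.1}
          = ENNReal.ofReal (Real.exp (-((lam + y) ^ α - lam ^ α)))) ∧
      Measure.map (fun p : ℝ × ℝ => p.2 / p.1) ((tiltedStable α lam f).prod expM)
        = Measure.map (fun t => (lam ^ α + t) ^ (1 / α) - lam) expM :=
  stmt12_general α hα lam hlam f hfnn hflap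
end
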